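/- arXiv:1609.06378 — 9 statements merged into one kernel-verified Lean document; each statement's English description precedes it below -/
import Mathlib

section
/- Let T ∈ Σ^n and let T# be T with the terminator # appended. For all positions 1 ≤ i < j ≤ n+1, the rotation of T# starting at i is lexicographically smaller than the rotation of T# starting at j if and only if the suffix (T#)[i..n+1] is lexicographically smaller than the suffix (T#)[j..n+1]. Consequently, the lexicographic order of the rotations of T# coincides with the lexicographic order of the suffixes of T#. -/
/-!
The rotation of `T#` at `i` is the suffix at `i` followed by the part before `i`. Since `#`
occurs only at the end of `T#`, no suffix of `T#` is a prefix of another one, so two rotations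
already differ inside their suffix parts and compare as those suffixes do.
-/

namespace List

variable {α : Type*}

theorem lex_append_append_iff_of_not_prefix {r : α → α → Prop} :
    ∀ {l₁ l₂ : List α}, ¬ l₁ <+: l₂ → ¬ l₂ <+: l₁ → ∀ t₁ t₂ : List α,
      (Lex r (l₁ ++ t₁) (l₂ ++ t₂) ↔ Lex r l₁ l₂)
  | [], _, h, _, _, _ => (h nil_prefix).elim
  | _, [], _, h, _, _ => (h nil_prefix).elim
  | a :: l₁, b :: l₂, h₁, h₂, t₁, t₂ => by
    simp only [cons_append, cons_lex_cons_iff]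
    by_cases hab : a = b
    · subst hab
      simp only [cons_prefix_cons, true_and] at h₁ h₂
      rw [lex_append_append_iff_of_not_prefix h₁ h₂]
    · simp only [hab, false_and, or_false]

theorem drop_concat_prefix_drop_concat_iff {T : List α} {c : α} (hc : c ∉ T) {i j : ℕ}
    (hi : i ≤ T.length) (hj : j ≤ T.length) :
    (T ++ [c]).drop i <+: (T ++ [c]).drop j ↔ i = j := by
  refine ⟨fun h => ?_, fun h => h ▸ prefix_refl _⟩
  rw [drop_append_of_le_length hi, drop_append_of_le_length hj, prefix_concat_iff] at h
  rcases h with h | h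
  · have := congrArg length (append_cancel_right h)
    simp only [length_drop] at this
    omega
  · exact (hc (mem_of_mem_drop (h.subset (mem_append_right _ (mem_singleton_self c))))).elim

end List

open List in
/-- for a string `T` of length `n` over a linearly ordered alphabet and
a terminator `#` strictly smaller than every character of `T`, the lexicographic
comparison of the rotations of `T#` coincides with the lexicographic comparison of
the corresponding suffixes of `T#`. -/
theorem rotations_order_eq_suffixes_order {α : Type*} [LinearOrder α]
    (T : List α) (n : ℕ) (hn : T.length = n)
    (hash : α) (hhash : ∀ c ∈ T, hash < c) :
    ∀ i j, 1 ≤ i → i < j → j ≤ n + 1 →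
      (List.Lex (· < ·) ((T ++ [hash]).rotate (i - 1)) ((T ++ [hash]).rotate (j - 1)) ↔
        List.Lex (· < ·) ((T ++ [hash]).drop (i - 1)) ((T ++ [hash]).drop (j - 1))) := by
  intro i j hi hij hj
  have hash_notMem : hash ∉ T := fun h => (hhash hash h).false
  have suffix_prefix_iff {k l : ℕ} (hk : k ≤ j - 1) (hl : l ≤ j - 1) :
      (T ++ [hash]).drop k <+: (T ++ [hash]).drop l ↔ k = l :=
    drop_concat_prefix_drop_concat_iff hash_notMem (by omega) (by omega)
  have hlen : (T ++ [hash]).length = n + 1 := by simp [hn]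
  rw [rotate_eq_drop_append_take (by omega), rotate_eq_drop_append_take (by omega)]
  exact lex_append_append_iff_of_not_prefix
    (by rw [suffix_prefix_iff (by omega) le_rfl]; omega)
    (by rw [suffix_prefix_iff le_rfl (by omega)]; omega) _ _
end

section
/- Let T be a string of length n over an alphabet Σ and let W be a string over Σ. If there exist two distinct characters a ≠ b in Σ such that both aW and bW are right-maximal repeats of T, then W is a maximal repeat of T, i.e. W is both a left-maximal repeat and a right-maximal repeat of T. (Every strongly left-maximal repeat of T is a maximal repeat of T.) -/
/-- `W` is a right-maximal repeat of `T`. -/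
def IsRightMaximalRepeat {α : Type*} (T W : List α) : Prop :=
  W.length < T.length ∧
    ∃ i j a b, i < T.length ∧ j < T.length ∧ i ≠ j ∧ a ≠ b ∧
      (W ++ [a]) <+: T.rotate i ∧ (W ++ [b]) <+: T.rotate j

/-- `W` is a left-maximal repeat of `T`. -/
def IsLeftMaximalRepeat {α : Type*} (T W : List α) : Prop :=
  W.length < T.length ∧
    ∃ i j a b, i < T.length ∧ j < T.length ∧ i ≠ j ∧ a ≠ b ∧
      (a :: W) <+: T.rotate i ∧ (b :: W) <+: T.rotate j

/-!
If `aW` and `bW` are right-maximal, dropping the first letter of their occurrences (shifting each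
rotation by one) shows that `W` is right-maximal. The occurrences of `aW` and `bW` themselves
witness left-maximality of `W`; they start at distinct positions because a single rotation cannot
begin with both `aW` and `bW`.
-/

section

variable {α : Type*}

theorem List.head_eq_of_cons_prefix_of_cons_prefix {a b : α} {W l : List α}
    (ha : a :: W <+: l) (hb : b :: W <+: l) : a = b :=
  List.head_eq_of_cons_eq <|
    (List.prefix_of_prefix_length_le ha hb (by simp)).eq_of_length (by simp)

theorem List.IsPrefix.prefix_rotate_succ {x : α} {s l : List α} {k : ℕ}
    (h : x :: s <+: l.rotate k) : s <+: l.rotate ((k + 1) % l.length) := by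
  obtain ⟨t, ht⟩ := h
  have hrot : l.rotate (k + 1) = s ++ (t ++ [x]) := by
    rw [← List.rotate_rotate, ← ht]
    simp [List.rotate_cons_succ]
  rw [List.rotate_mod, hrot]
  exact List.prefix_append s _

theorem IsRightMaximalRepeat.of_cons {T W : List α} {a : α}
    (h : IsRightMaximalRepeat T (a :: W)) : IsRightMaximalRepeat T W := by
  obtain ⟨hlen, i, j, c, d, hi, hj, hij, hcd, hpi, hpj⟩ := h
  have hT : 0 < T.length := by omega
  have hsucc : (i + 1) % T.length ≠ (j + 1) % T.length := fun h ↦ hij <| by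
    have : i % T.length = j % T.length := Nat.ModEq.add_right_cancel' 1 h
    rwa [Nat.mod_eq_of_lt hi, Nat.mod_eq_of_lt hj] at this
  refine ⟨by simp at hlen; omega, (i + 1) % T.length, (j + 1) % T.length, c, d,
    Nat.mod_lt _ hT, Nat.mod_lt _ hT, hsucc, hcd, hpi.prefix_rotate_succ, hpj.prefix_rotate_succ⟩

theorem IsRightMaximalRepeat.exists_prefix_rotate {T W : List α}
    (h : IsRightMaximalRepeat T W) : ∃ i < T.length, W <+: T.rotate i := by
  obtain ⟨-, i, -, c, -, hi, -, -, -, hpi, -⟩ := h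
  exact ⟨i, hi, (List.prefix_append W [c]).trans hpi⟩

theorem isLeftMaximalRepeat_of_isRightMaximalRepeat_cons {T W : List α} {a b : α} (hab : a ≠ b)
    (ha : IsRightMaximalRepeat T (a :: W)) (hb : IsRightMaximalRepeat T (b :: W)) :
    IsLeftMaximalRepeat T W := by
  obtain ⟨i, hi, hpi⟩ := ha.exists_prefix_rotate
  obtain ⟨j, hj, hpj⟩ := hb.exists_prefix_rotate
  refine ⟨ha.of_cons.1, i, j, a, b, hi, hj, ?_, hab, hpi, hpj⟩
  rintro rfl
  exact hab (List.head_eq_of_cons_prefix_of_cons_prefix hpi hpj)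

end

theorem stronglyLeftMaximal_isMaximalRepeat_general {α : Type*} (T : List α)
    (W : List α) (a b : α) (hab : a ≠ b)
    (ha : IsRightMaximalRepeat T (a :: W)) (hb : IsRightMaximalRepeat T (b :: W)) :
    IsLeftMaximalRepeat T W ∧ IsRightMaximalRepeat T W :=
  ⟨isLeftMaximalRepeat_of_isRightMaximalRepeat_cons hab ha hb, ha.of_cons⟩

/-- every strongly left-maximal repeat is a maximal repeat: if there
are two distinct characters `a ≠ b` such that `aW` and `bW` are both right-maximal
repeats of `T`, then `W` is both a left-maximal and a right-maximal repeat of `T`. -/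
theorem stronglyLeftMaximal_isMaximalRepeat {α : Type*} (T : List α) (n : ℕ)
    (hn : T.length = n) (W : List α) (a b : α) (hab : a ≠ b)
    (ha : IsRightMaximalRepeat T (a :: W)) (hb : IsRightMaximalRepeat T (b :: W)) :
    IsLeftMaximalRepeat T W ∧ IsRightMaximalRepeat T W :=
  stronglyLeftMaximal_isMaximalRepeat_general T W a b hab ha hb
end

section
/- Let T be a string of length n over an alphabet Σ and let W be a right-maximal repeat of T with |W| ≤ n−2. If there is a single character a such that, for every rotation of T having W as a prefix, the rotation starting one position earlier (cyclically) begins with a — i.e., every occurrence of W is cyclically preceded by the same character a — then aW is a right-maximal repeat of T. (Hence every right-maximal repeat of T of length at most n−2 that is not strongly left-maximal has a right-maximal left-extension; equivalently, every leaf of the suffix-link tree either has more than one Weiner link or its label has length n−1.) -/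
theorem Nat.add_sub_one_mod_add_one_mod {n i : ℕ} (hi : i < n) :
    ((i + n - 1) % n + 1) % n = i := by
  rw [Nat.mod_add_mod, Nat.sub_add_cancel (by omega), Nat.add_mod_right, Nat.mod_eq_of_lt hi]

namespace List

variable {α : Type*}

theorem rotate_succ_of_rotate_eq_cons {l t : List α} {k : ℕ} {a : α}
    (h : l.rotate k = a :: t) : l.rotate (k + 1) = t ++ [a] := by
  rw [← rotate_rotate, h, rotate_cons_succ, rotate_zero]

theorem rotate_sub_one_mod_add_one (l : List α) {i : ℕ} (hi : i < l.length) :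
    l.rotate ((i + l.length - 1) % l.length + 1) = l.rotate i := by
  rw [← rotate_mod, Nat.add_sub_one_mod_add_one_mod hi]

theorem cons_prefix_rotate_sub_one_mod {l u : List α} {i : ℕ} {a : α}
    (hi : i < l.length) (hu : u.length < l.length) (h : u <+: l.rotate i)
    (ha : (l.rotate ((i + l.length - 1) % l.length)).head? = some a) :
    a :: u <+: l.rotate ((i + l.length - 1) % l.length) := by
  obtain ⟨t, ht⟩ := head?_eq_some_iff.mp ha
  have hrot : l.rotate i = t ++ [a] := by
    rw [← rotate_sub_one_mod_add_one l hi, rotate_succ_of_rotate_eq_cons ht]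
  have ht_length : t.length + 1 = l.length := by
    simpa [ht] using length_rotate l ((i + l.length - 1) % l.length)
  rw [ht, prefix_cons_inj]
  exact (isPrefix_append_of_length (by omega)).mp (hrot ▸ h)

end List

/-- let `W` be a right-maximal repeat of `T` with `|W| ≤ n − 2`.  If
there is a single character `a` such that, for every rotation of `T` having `W` as a
prefix, the rotation starting one position earlier (cyclically) begins with `a`,
then `aW` is a right-maximal repeat of `T`. -/
theorem rightMaximal_unique_left_extension {α : Type*} (T : List α) (n : ℕ)
    (hn : T.length = n) (W : List α)
    (hW : IsRightMaximalRepeat T W) (hlen : W.length ≤ n - 2) (a : α)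
    (ha : ∀ i, i < n → W <+: T.rotate i →
      (T.rotate ((i + n - 1) % n)).head? = some a) :
    IsRightMaximalRepeat T (a :: W) := by
  subst hn
  obtain ⟨-, i, j, b, c, hi, hj, hij, hbc, hib, hjc⟩ := hW
  have hextend : ∀ k d, k < T.length → W ++ [d] <+: T.rotate k →
      a :: (W ++ [d]) <+: T.rotate ((k + T.length - 1) % T.length) := fun k d hk h =>
    List.cons_prefix_rotate_sub_one_mod hk
      (by simp only [List.length_append, List.length_singleton]; omega) h
      (ha k hk ((List.prefix_append W [d]).trans h))
  refine ⟨?_, _, _, b, c, Nat.mod_lt _ (by omega), Nat.mod_lt _ (by omega), ?_, hbc,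
    hextend i b hi hib, hextend j c hj hjc⟩
  · rw [List.length_cons]
    omega
  · intro h
    apply hij
    rw [← Nat.add_sub_one_mod_add_one_mod hi, h, Nat.add_sub_one_mod_add_one_mod hj]
end

section
/- Let T be a string of length n ≥ 2 over an alphabet Σ whose n rotations are pairwise distinct. Then: (1) the number of distinct nonempty right-maximal repeats of T is at most n−2 (this is the number of suffix links of the suffix tree of T); (2) the number of pairs (W, a) with a ∈ Σ such that both W and aW are right-maximal repeats of T (explicit Weiner links) is at most n−2; (3) the number of pairs (W, a) with a ∈ Σ such that W is a right-maximal repeat of T, aW is a prefix of at least one rotation of T, and aW is not a right-maximal repeat of T (implicit Weiner links) is at most 3n−3. -/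
section

variable {α : Type*}

theorem Set.finite_and_ncard_le_of_injOn {β : Type*} {s : Set α} {t : Set β} {f : α → β}
    (hf : Set.MapsTo f s t) (hi : Set.InjOn f s) (ht : t.Finite) :
    s.Finite ∧ s.ncard ≤ t.ncard :=
  ⟨ht.of_injOn hf hi, Set.ncard_le_ncard_of_injOn f hf hi ht⟩

theorem List.IsPrefix.drop_rotate {T x : List α} {r m : ℕ} (hx : x <+: T.rotate r)
    (hm : m ≤ x.length) : x.drop m <+: T.rotate (r + m) := by
  obtain ⟨s, hs⟩ := hx
  have hm' : m ≤ (T.rotate r).length := by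
    rw [← hs, List.length_append]; omega
  rw [← List.rotate_rotate, List.rotate_eq_drop_append_take hm', ← hs,
    List.drop_append_of_le_length hm, List.append_assoc]
  exact List.prefix_append _ _

theorem IsRightMaximalRepeat.drop {T W : List α} (h : IsRightMaximalRepeat T W) {m : ℕ}
    (hm : m ≤ W.length) : IsRightMaximalRepeat T (W.drop m) := by
  obtain ⟨hlen, i, j, a, b, hi, hj, hij, hab, hia, hjb⟩ := h
  have hpos : 0 < T.length := by omega
  have shift : ∀ k c, (W ++ [c]) <+: T.rotate k →
      (W.drop m ++ [c]) <+: T.rotate ((k + m) % T.length) := by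
    intro k c hk
    rw [List.rotate_mod, ← List.drop_append_of_le_length hm]
    exact hk.drop_rotate (by simp; omega)
  refine ⟨by simp; omega, (i + m) % T.length, (j + m) % T.length, a, b, Nat.mod_lt _ hpos,
    Nat.mod_lt _ hpos, fun hmod => hij ?_, hab, shift i a hia, shift j b hjb⟩
  exact (Nat.ModEq.add_right_cancel' m hmod).eq_of_lt_of_lt hi hj

theorem isRightMaximalRepeat_nil {T : List α} (hT : T.rotate 1 ≠ T) :
    IsRightMaximalRepeat T [] := by
  obtain _ | ⟨a, l⟩ := T
  · exact absurd rfl hT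
  have : Nonempty α := ⟨a⟩
  obtain ⟨k, hk, hka⟩ : ∃ k, ∃ hk : k < (a :: l).length, (a :: l)[k] ≠ a := by
    by_contra! hconst
    exact hT (List.rotate_one_eq_self_iff_eq_replicate.mpr
      ⟨a, List.eq_replicate_iff.mpr ⟨rfl, fun b hb => by
        obtain ⟨k, hk, rfl⟩ := List.getElem_of_mem hb; exact hconst k hk⟩⟩)
  have head_prefix : ∀ k (hk : k < (a :: l).length), [(a :: l)[k]] <+: (a :: l).rotate k :=
    fun k hk => List.singleton_prefix_iff_head?_eq_some.mpr
      (by rw [List.head?_rotate hk, List.getElem?_eq_getElem hk])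
  refine ⟨by simp, k, 0, _, a, hk, by simp, ?_, hka, head_prefix k hk, head_prefix 0 (by simp)⟩
  rintro rfl
  exact hka rfl

namespace SuffixTree

def occ (T W : List α) : Set ℕ := {p | p < T.length ∧ W <+: T.rotate p}

-- Junk value `sInf ∅ = 0` when `W` does not occur.
noncomputable def firstOcc (T W : List α) : ℕ := sInf (occ T W)

def nextChar (T W : List α) (p : ℕ) : Option α := (T.rotate p)[W.length]?

def branchOcc (T W : List α) : Set ℕ :=
  {q ∈ occ T W | nextChar T W q ≠ nextChar T W (firstOcc T W)}

noncomputable def firstBranch (T W : List α) : ℕ := sInf (branchOcc T W)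

variable {T W : List α}

theorem nextChar_eq_of_prefix {c : α} {t : List α} {p : ℕ} (h : W ++ c :: t <+: T.rotate p) :
    nextChar T W p = some c := by
  obtain ⟨s, hs⟩ := h
  simp [nextChar, ← hs]

theorem firstBranch_mem (h : IsRightMaximalRepeat T W) : firstBranch T W ∈ branchOcc T W := by
  obtain ⟨-, i, j, a, b, hi, hj, -, hab, hia, hjb⟩ := h
  have hocc : ∀ {k c}, k < T.length → W ++ [c] <+: T.rotate k → k ∈ occ T W :=
    fun hk hkc => ⟨hk, (List.prefix_append _ _).trans hkc⟩
  apply Nat.sInf_mem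
  by_cases hfirst : nextChar T W (firstOcc T W) = some a
  · refine ⟨j, hocc hj hjb, ?_⟩
    rw [nextChar_eq_of_prefix hjb, hfirst]
    exact fun h => hab (Option.some_injective _ h).symm
  · exact ⟨i, hocc hi hia, fun h => hfirst (h ▸ nextChar_eq_of_prefix hia)⟩

theorem firstOcc_lt_firstBranch (h : IsRightMaximalRepeat T W) : firstOcc T W < firstBranch T W :=
  lt_of_le_of_ne (Nat.sInf_le (firstBranch_mem h).1) fun heq => (firstBranch_mem h).2 (by rw [heq])

theorem length_le_of_firstBranch_eq {W' : List α} (hW : IsRightMaximalRepeat T W)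
    (hW' : IsRightMaximalRepeat T W') (heq : firstBranch T W = firstBranch T W') :
    W'.length ≤ W.length := by
  by_contra! hlt
  obtain ⟨⟨-, hgW⟩, hg_next⟩ := firstBranch_mem hW
  obtain ⟨hgW', -⟩ := heq ▸ firstBranch_mem hW'
  obtain ⟨u, rfl⟩ := List.prefix_of_prefix_length_le hgW hgW'.2 hlt.le
  obtain _ | ⟨c, t⟩ := u
  · simp at hlt
  have hfirst : firstOcc T (W ++ c :: t) = firstBranch T W := by
    refine le_antisymm (Nat.sInf_le hgW') (not_lt.mp fun hp => ?_)
    obtain ⟨hp_lt, hp_pre⟩ : firstOcc T (W ++ c :: t) ∈ occ T (W ++ c :: t) :=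
      Nat.sInf_mem ⟨_, hgW'⟩
    have hsame : nextChar T W (firstOcc T (W ++ c :: t)) = nextChar T W (firstOcc T W) := by
      by_contra hne
      exact Nat.notMem_of_lt_sInf hp ⟨⟨hp_lt, (List.prefix_append _ _).trans hp_pre⟩, hne⟩
    rw [nextChar_eq_of_prefix hp_pre, ← nextChar_eq_of_prefix hgW'.2] at hsame
    exact hg_next hsame
  exact (firstOcc_lt_firstBranch hW').ne (hfirst.trans heq)

theorem firstBranch_injOn : Set.InjOn (firstBranch T) {W | IsRightMaximalRepeat T W} := by
  intro W hW W' hW' heq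
  have hlen := le_antisymm (length_le_of_firstBranch_eq hW' hW heq.symm)
    (length_le_of_firstBranch_eq hW hW' heq)
  exact (List.prefix_of_prefix_length_le (firstBranch_mem hW).1.2
    (heq ▸ (firstBranch_mem hW').1.2) hlen.le).eq_of_length hlen

theorem rightMaximalRepeats_finite_and_ncard_le (T : List α) :
    {W | IsRightMaximalRepeat T W}.Finite ∧
      {W | IsRightMaximalRepeat T W}.ncard ≤ T.length - 1 := by
  have hmaps : Set.MapsTo (firstBranch T) {W | IsRightMaximalRepeat T W}
      (Finset.Ioo 0 T.length : Set ℕ) := fun W hW => by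
    rw [Finset.coe_Ioo, Set.mem_Ioo]
    exact ⟨(Nat.zero_le _).trans_lt (firstOcc_lt_firstBranch hW), (firstBranch_mem hW).1.1⟩
  simpa using Set.finite_and_ncard_le_of_injOn hmaps firstBranch_injOn
    (Finset.Ioo 0 T.length).finite_toSet

theorem nonemptyRightMaximalRepeats_finite_and_ncard_le (hT : T.rotate 1 ≠ T) :
    {W | W ≠ [] ∧ IsRightMaximalRepeat T W}.Finite ∧
      {W | W ≠ [] ∧ IsRightMaximalRepeat T W}.ncard ≤ T.length - 2 := by
  have hdiff :
      {W | W ≠ [] ∧ IsRightMaximalRepeat T W} = {W | IsRightMaximalRepeat T W} \ {[]} := by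
    ext W
    simp [and_comm]
  obtain ⟨hfin, hcard⟩ := rightMaximalRepeats_finite_and_ncard_le T
  rw [hdiff, Set.ncard_sdiff_singleton_of_mem (s := {W | IsRightMaximalRepeat T W})
    (isRightMaximalRepeat_nil hT)]
  exact ⟨hfin.sdiff, by omega⟩

def explicitWeinerLinks (T : List α) : Set (List α × α) :=
  {p | IsRightMaximalRepeat T p.1 ∧ IsRightMaximalRepeat T (p.2 :: p.1)}

def implicitWeinerLinks (T : List α) : Set (List α × α) :=
  {p | IsRightMaximalRepeat T p.1 ∧ (∃ i, i < T.length ∧ (p.2 :: p.1) <+: T.rotate i) ∧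
    ¬ IsRightMaximalRepeat T (p.2 :: p.1)}

theorem explicitWeinerLinks_finite_and_ncard_le (hT : T.rotate 1 ≠ T) :
    (explicitWeinerLinks T).Finite ∧ (explicitWeinerLinks T).ncard ≤ T.length - 2 := by
  obtain ⟨hfin, hcard⟩ := nonemptyRightMaximalRepeats_finite_and_ncard_le hT
  have hinj : Function.Injective fun p : List α × α => p.2 :: p.1 := fun p p' h =>
    Prod.ext (List.cons.inj h).2 (List.cons.inj h).1
  have hmaps : Set.MapsTo (fun p : List α × α => p.2 :: p.1) (explicitWeinerLinks T)
      {W | W ≠ [] ∧ IsRightMaximalRepeat T W} := fun p hp => ⟨List.cons_ne_nil _ _, hp.2⟩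
  exact (Set.finite_and_ncard_le_of_injOn hmaps hinj.injOn hfin).imp_right (·.trans hcard)

theorem drop_eq_of_prefix_rotate_of_modEq {V V' : List α} {q q' : ℕ} (hq : q < T.length)
    (hV : V <+: T.rotate q) (hV' : V' <+: T.rotate q') (hlen : V.length ≤ V'.length)
    (hend : q + V.length ≡ q' + V'.length [MOD T.length]) :
    V'.drop (V'.length - V.length) = V := by
  have hstart : (q' + (V'.length - V.length)) % T.length = q := by
    have hsplit : q' + (V'.length - V.length) + V.length = q' + V'.length := by omega
    have hmod := Nat.ModEq.add_right_cancel' V.length (hsplit ▸ hend.symm)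
    exact (show _ = _ from hmod).trans (Nat.mod_eq_of_lt hq)
  have hpre := hV'.drop_rotate (m := V'.length - V.length) (Nat.sub_le _ _)
  rw [← List.rotate_mod, hstart] at hpre
  exact (List.prefix_of_prefix_length_le hpre hV (by simp; omega)).eq_of_length (by simp; omega)

noncomputable def occEnd (T V : List α) : ℕ := (firstOcc T V + V.length) % T.length

theorem eq_of_occEnd_eq {p p' : List α × α} (hp : p ∈ implicitWeinerLinks T)
    (hp' : p' ∈ implicitWeinerLinks T) (hlen : p.1.length ≤ p'.1.length)
    (hend : occEnd T (p.2 :: p.1) = occEnd T (p'.2 :: p'.1)) : p = p' := by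
  obtain ⟨W, a⟩ := p
  obtain ⟨W', a'⟩ := p'
  obtain ⟨-, hocc, hnot⟩ := hp
  obtain ⟨hW', hocc', -⟩ := hp'
  obtain ⟨hq, hpre⟩ : firstOcc T (a :: W) ∈ occ T (a :: W) := Nat.sInf_mem hocc
  obtain ⟨-, hpre'⟩ : firstOcc T (a' :: W') ∈ occ T (a' :: W') := Nat.sInf_mem hocc'
  have hdrop := drop_eq_of_prefix_rotate_of_modEq hq hpre hpre' (by simpa using hlen) hend
  rw [List.length_cons, List.length_cons, Nat.add_sub_add_right] at hdrop
  cases hd : W'.length - W.length with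
  | zero =>
    rw [hd, List.drop_zero] at hdrop
    obtain ⟨rfl, rfl⟩ := List.cons.inj hdrop
    rfl
  | succ e =>
    rw [hd, List.drop_succ_cons] at hdrop
    exact absurd (hdrop ▸ IsRightMaximalRepeat.drop (W := W') hW' (by omega)) hnot

theorem implicitWeinerLinks_finite_and_ncard_le (T : List α) :
    (implicitWeinerLinks T).Finite ∧ (implicitWeinerLinks T).ncard ≤ T.length := by
  have hmaps : Set.MapsTo (fun p : List α × α => occEnd T (p.2 :: p.1)) (implicitWeinerLinks T)
      (Finset.range T.length : Set ℕ) := by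
    rintro p ⟨-, ⟨i, hi, -⟩, -⟩
    simpa [occEnd] using Nat.mod_lt _ (Nat.zero_lt_of_lt hi)
  have hinj :
      Set.InjOn (fun p : List α × α => occEnd T (p.2 :: p.1)) (implicitWeinerLinks T) := by
    intro p hp p' hp' hend
    obtain hle | hle := le_total p.1.length p'.1.length
    · exact eq_of_occEnd_eq hp hp' hle hend
    · exact (eq_of_occEnd_eq hp' hp hle hend.symm).symm
  simpa using Set.finite_and_ncard_le_of_injOn hmaps hinj (Finset.range T.length).finite_toSet

end SuffixTree

end

/-- if the `n ≥ 2` rotations of `T` are pairwise distinct, then: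
(1) `T` has at most `n − 2` distinct nonempty right-maximal repeats (suffix links);
(2) there are at most `n − 2` pairs `(W, a)` such that both `W` and `aW` are
right-maximal repeats of `T` (explicit Weiner links);
(3) there are at most `3n − 3` pairs `(W, a)` such that `W` is a right-maximal
repeat, `aW` is a prefix of at least one rotation of `T`, and `aW` is not a
right-maximal repeat of `T` (implicit Weiner links). -/
theorem weiner_link_counts {α : Type*} (T : List α) (n : ℕ)
    (hn : T.length = n) (h2 : 2 ≤ n)
    (hdistinct : ∀ i j, i < n → j < n → T.rotate i = T.rotate j → i = j) :
    ({W : List α | W ≠ [] ∧ IsRightMaximalRepeat T W}.Finite ∧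
      {W : List α | W ≠ [] ∧ IsRightMaximalRepeat T W}.ncard ≤ n - 2) ∧
    ({p : List α × α | IsRightMaximalRepeat T p.1 ∧
        IsRightMaximalRepeat T (p.2 :: p.1)}.Finite ∧
      {p : List α × α | IsRightMaximalRepeat T p.1 ∧
        IsRightMaximalRepeat T (p.2 :: p.1)}.ncard ≤ n - 2) ∧
    ({p : List α × α | IsRightMaximalRepeat T p.1 ∧
        (∃ i, i < n ∧ (p.2 :: p.1) <+: T.rotate i) ∧
        ¬ IsRightMaximalRepeat T (p.2 :: p.1)}.Finite ∧
      {p : List α × α | IsRightMaximalRepeat T p.1 ∧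
        (∃ i, i < n ∧ (p.2 :: p.1) <+: T.rotate i) ∧
        ¬ IsRightMaximalRepeat T (p.2 :: p.1)}.ncard ≤ 3 * n - 3) := by
  subst hn
  have hT : T.rotate 1 ≠ T := fun h =>
    one_ne_zero (hdistinct 1 0 (by omega) (by omega) (by rw [h, List.rotate_zero]))
  obtain ⟨hfin, hcard⟩ := SuffixTree.implicitWeinerLinks_finite_and_ncard_le T
  exact ⟨SuffixTree.nonemptyRightMaximalRepeats_finite_and_ncard_le hT,
    SuffixTree.explicitWeinerLinks_finite_and_ncard_le hT, hfin, hcard.trans (by omega)⟩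
end

section
/- Let T be a string of length n whose n rotations are pairwise lexicographically distinct, let L = BWT_T, and define LF(i) = C[L[i]] + rank_{L[i]}(L, i) for i ∈ [1..n]. Then for every i ∈ [1..n], SA_T[LF(i)] = SA_T[i] − 1 (mod₁ n); in particular, LF is a permutation of [1..n]. -/
/-!
Let `R j` be the `j`-th smallest rotation and `P j` the rotation starting one position earlier,
so that `P j = L j :: W` and `R j = W ++ [L j]`. Comparing `P j` with `P i` therefore compares
first `L j` with `L i` and, on a tie, `R j` with `R i`, that is `j` with `i`; hence
`#{j | P j ≤ P i} = C (L i) + rank (L i) i`. As `j ↦ P j` runs through all rotations exactly as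
`j ↦ R j` does, the same count is the rank `k` of `P i` among the sorted rotations, so
`sa k = sa i − 1 (mod₁ n)`.
-/

open Finset

namespace List

variable {α : Type*}

theorem append_lt_append_iff_of_length_eq [LT α] {u v s t : List α}
    (h : u.length = v.length) : u ++ s < v ++ t ↔ u < v ∨ u = v ∧ s < t := by
  induction u generalizing v with
  | nil => simp_all [length_eq_zero_iff.mp h.symm]
  | cons a u ih =>
    obtain _ | ⟨b, v⟩ := v
    · simp at h
    · simp only [cons_append, cons_lt_cons_iff, cons.injEq, ih (Nat.succ_injective h)]
      tauto

theorem cons_lt_cons_iff_rotate_one_lt [Preorder α] {a b : α} {u v : List α}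
    (h : u.length = v.length) :
    a :: u < b :: v ↔ a < b ∨ a = b ∧ (a :: u).rotate 1 < (b :: v).rotate 1 := by
  simp only [cons_lt_cons_iff, rotate_cons_succ, rotate_zero,
    append_lt_append_iff_of_length_eq h]
  constructor
  · rintro (hab | ⟨rfl, huv⟩) <;> simp_all
  · rintro (hab | ⟨rfl, huv | ⟨rfl, haa⟩⟩)
    · exact .inl hab
    · exact .inr ⟨rfl, huv⟩
    · exact absurd haa (by simp)

theorem countP_eq_card_filter_range (q : α → Bool) (l : List α) :
    l.countP q = #{k ∈ Finset.range l.length | l[k]?.any q} := by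
  induction l with
  | nil => simp
  | cons a l ih =>
    rw [card_filter] at ih ⊢
    rw [length_cons, Finset.sum_range_succ', countP_cons, ih]
    simp

theorem exists_rotate_eq_cons_of_getElem?_eq_some {l : List α} {k : ℕ} {a : α}
    (h : l[k]? = some a) : ∃ t, l.rotate k = a :: t := by
  rw [← head?_eq_some_iff, head?_rotate (getElem?_eq_some_iff.mp h).1, h]

end List

theorem Finset.card_filter_comp_of_bijOn {ι κ : Type*} {s : Finset ι} {t : Finset κ}
    {f : ι → κ} (hf : Set.BijOn f s t) (q : κ → Prop) [DecidablePred q] :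
    #{i ∈ s | q (f i)} = #{k ∈ t | q k} := by
  refine card_nbij f (fun i hi => ?_) (hf.injOn.mono (coe_subset.mpr (filter_subset _ _)))
    (fun k hk => ?_)
  · simp only [coe_filter, Set.mem_ofPred_eq] at hi ⊢
    exact ⟨hf.mapsTo hi.1, hi.2⟩
  · simp only [coe_filter, Set.mem_ofPred_eq] at hk
    obtain ⟨i, hi, rfl⟩ := hf.surjOn hk.1
    exact ⟨i, by simpa using ⟨hi, hk.2⟩, rfl⟩

theorem StrictMonoOn.card_filter_Icc_le_apply {β : Type*} [LinearOrder β] {g : ℕ → β}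
    {n k : ℕ} (hg : StrictMonoOn g (Set.Icc 1 n)) (hk : k ∈ Set.Icc 1 n) :
    #{j ∈ Icc 1 n | g j ≤ g k} = k := by
  have : {j ∈ Icc 1 n | g j ≤ g k} = Icc 1 k := by
    ext j
    simp only [mem_filter, mem_Icc]
    constructor
    · rintro ⟨hj, hjk⟩
      exact ⟨hj.1, (hg.le_iff_le hj hk).mp hjk⟩
    · rintro ⟨hj, hjk⟩
      have hj' : j ∈ Set.Icc 1 n := ⟨hj, hjk.trans hk.2⟩
      exact ⟨hj', (hg.le_iff_le hj' hk).mpr hjk⟩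
  simp [this]

def modOne (n x : ℕ) : ℕ := if x % n = 0 then n else x % n

theorem modOne_pred_eq {n p : ℕ} (hp : p ∈ Set.Icc 1 n) :
    modOne n (p - 1) = if p = 1 then n else p - 1 := by
  obtain ⟨hp1, hpn⟩ := hp
  unfold modOne
  split_ifs with h₁ h₂ h₂
  · rfl
  · rw [Nat.mod_eq_of_lt (by omega)] at h₁
    omega
  · simp [h₂] at h₁
  · exact Nat.mod_eq_of_lt (by omega)

theorem bijOn_modOne_pred (n : ℕ) :
    Set.BijOn (fun p => modOne n (p - 1)) (Set.Icc 1 n) (Set.Icc 1 n) := by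
  refine ⟨fun p hp => ?_, fun p hp q hq hpq => ?_, fun q hq => ?_⟩
  · simp only [modOne_pred_eq hp, Set.mem_Icc] at hp ⊢
    split_ifs <;> omega
  · simp only [modOne_pred_eq hp, modOne_pred_eq hq] at hpq
    simp only [Set.mem_Icc] at hp hq
    split_ifs at hpq <;> omega
  · obtain ⟨hq1, hqn⟩ := hq
    refine ⟨if q = n then 1 else q + 1, ?_, ?_⟩
    · simp only [Set.mem_Icc]
      split_ifs <;> omega
    · simp only
      rw [modOne_pred_eq (by simp only [Set.mem_Icc]; split_ifs <;> omega)]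
      split_ifs <;> omega

theorem bijOn_sub_one (n : ℕ) : Set.BijOn (· - 1) (Set.Icc 1 n) (Set.Iio n) := by
  refine ⟨fun p hp => ?_, fun p hp q hq hpq => ?_, fun k hk => ⟨k + 1, ?_, rfl⟩⟩
  · simp only [Set.mem_Icc, Set.mem_Iio] at hp ⊢
    omega
  · simp only [Set.mem_Icc] at hp hq hpq
    omega
  · simp only [Set.mem_Iio, Set.mem_Icc] at hk ⊢
    omega

theorem List.rotate_modOne_pred_sub_one_rotate_one {α : Type*} {l : List α} {p : ℕ}
    (hp : p ∈ Set.Icc 1 l.length) :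
    (l.rotate (modOne l.length (p - 1) - 1)).rotate 1 = l.rotate (p - 1) := by
  rw [List.rotate_rotate, modOne_pred_eq hp]
  split_ifs with h
  · rw [h, Nat.sub_add_cancel (hp.1.trans hp.2), List.rotate_length, Nat.sub_self,
      List.rotate_zero]
  · congr 1
    have := hp.1
    omega

section LFMapping

-- `f j` is the 0-based start of the `j`-th smallest rotation, `g j` that of the rotation one
-- position to its left, whose first character is `L j`.
variable {α ι : Type*} [LinearOrder α] [LinearOrder ι] {T : List α} {s : Set ι}
  {f g : ι → ℕ} {L : ι → α} {i j : ι}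

theorem rotate_lt_rotate_iff_of_rotate_one_eq
    (hmono : StrictMonoOn (fun j => T.rotate (f j)) s)
    (hrot : ∀ j ∈ s, (T.rotate (g j)).rotate 1 = T.rotate (f j))
    (hL : ∀ j ∈ s, T[g j]? = some (L j)) (hj : j ∈ s) (hi : i ∈ s) :
    T.rotate (g j) < T.rotate (g i) ↔ L j < L i ∨ L j = L i ∧ j < i := by
  obtain ⟨u, hu⟩ := List.exists_rotate_eq_cons_of_getElem?_eq_some (hL j hj)
  obtain ⟨v, hv⟩ := List.exists_rotate_eq_cons_of_getElem?_eq_some (hL i hi)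
  have hlen : u.length = v.length := by
    have hu' := congrArg List.length hu
    have hv' := congrArg List.length hv
    simp only [List.length_rotate, List.length_cons] at hu' hv'
    omega
  rw [hu, hv, List.cons_lt_cons_iff_rotate_one_lt hlen, ← hu, ← hv, hrot j hj, hrot i hi,
    hmono.lt_iff_lt hj hi]

theorem rotate_le_rotate_iff_of_rotate_one_eq
    (hmono : StrictMonoOn (fun j => T.rotate (f j)) s)
    (hrot : ∀ j ∈ s, (T.rotate (g j)).rotate 1 = T.rotate (f j))
    (hL : ∀ j ∈ s, T[g j]? = some (L j)) (hj : j ∈ s) (hi : i ∈ s) :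
    T.rotate (g j) ≤ T.rotate (g i) ↔ L j < L i ∨ L j = L i ∧ j ≤ i := by
  rw [← not_lt, rotate_lt_rotate_iff_of_rotate_one_eq hmono hrot hL hi hj]
  grind

end LFMapping

section Counting

variable {α : Type*} [LinearOrder α] {T : List α} {n : ℕ} {f g : ℕ → ℕ} {L : ℕ → α}

theorem card_filter_lt_eq_countP (hg : Set.BijOn g (Set.Icc 1 n) (Set.Iio T.length))
    (hL : ∀ j ∈ Set.Icc 1 n, T[g j]? = some (L j)) (c : α) :
    #{j ∈ Icc 1 n | L j < c} = T.countP (· < c) := by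
  rw [← coe_Icc, ← coe_range] at hg
  rw [List.countP_eq_card_filter_range,
    ← card_filter_comp_of_bijOn hg (fun k => T[k]?.any (· < c) = true)]
  congr 1
  exact filter_congr fun j hj => by simp [hL j (mem_Icc.mp hj)]

theorem card_filter_rotate_le_rotate_eq_rank
    (hf : Set.BijOn f (Set.Icc 1 n) (Set.Iio T.length))
    (hg : Set.BijOn g (Set.Icc 1 n) (Set.Iio T.length))
    (hmono : StrictMonoOn (fun j => T.rotate (f j)) (Set.Icc 1 n)) {k : ℕ}
    (hk : k ∈ Set.Icc 1 n) :
    #{j ∈ Icc 1 n | T.rotate (g j) ≤ T.rotate (f k)} = k := by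
  rw [← coe_Icc, ← coe_range] at hf hg
  rw [card_filter_comp_of_bijOn hg (fun p => T.rotate p ≤ T.rotate (f k)),
    ← card_filter_comp_of_bijOn hf, hmono.card_filter_Icc_le_apply hk]

theorem card_filter_rotate_le_rotate_eq_countP_add
    (hmono : StrictMonoOn (fun j => T.rotate (f j)) (Set.Icc 1 n))
    (hg : Set.BijOn g (Set.Icc 1 n) (Set.Iio T.length))
    (hrot : ∀ j ∈ Set.Icc 1 n, (T.rotate (g j)).rotate 1 = T.rotate (f j))
    (hL : ∀ j ∈ Set.Icc 1 n, T[g j]? = some (L j)) {i : ℕ} (hi : i ∈ Set.Icc 1 n) :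
    #{j ∈ Icc 1 n | T.rotate (g j) ≤ T.rotate (g i)} =
      T.countP (· < L i) + #{j ∈ Icc 1 i | L j = L i} := by
  have hrank : {j ∈ Icc 1 n | L j = L i ∧ j ≤ i} = {j ∈ Icc 1 i | L j = L i} := by
    ext j
    simp only [mem_filter, mem_Icc]
    constructor
    · rintro ⟨⟨hj, -⟩, heq, hji⟩
      exact ⟨⟨hj, hji⟩, heq⟩
    · rintro ⟨⟨hj, hji⟩, heq⟩
      exact ⟨⟨hj, hji.trans hi.2⟩, heq, hji⟩
  rw [filter_congr fun j hj => rotate_le_rotate_iff_of_rotate_one_eq hmono hrot hL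
      (mem_Icc.mp hj) hi, filter_or,
    card_union_of_disjoint (disjoint_filter.mpr fun j _ hlt heq => hlt.ne heq.1),
    card_filter_lt_eq_countP hg hL, hrank]

end Counting

theorem lf_mapping_correct_general {α : Type*} [LinearOrder α]
    (T : List α) (n : ℕ) (hn : T.length = n)
    (sa : ℕ → ℕ)
    (hsa_range : ∀ i, 1 ≤ i → i ≤ n → 1 ≤ sa i ∧ sa i ≤ n)
    (hsa_mono : ∀ i j, 1 ≤ i → i < j → j ≤ n →
      List.Lex (· < ·) (T.rotate (sa i - 1)) (T.rotate (sa j - 1)))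
    (mod1 : ℕ → ℕ) (hmod1 : ∀ x, mod1 x = if x % n = 0 then n else x % n)
    (L : ℕ → α)
    (hL : ∀ i, 1 ≤ i → i ≤ n → T[mod1 (sa i - 1) - 1]? = some (L i))
    (C : α → ℕ) (hC : ∀ c, C c = T.countP (fun x => decide (x < c)))
    (rank : α → ℕ → ℕ)
    (hrank : ∀ c i, rank c i = ((Finset.Icc 1 i).filter (fun j => L j = c)).card)
    (LF : ℕ → ℕ) (hLF : ∀ i, LF i = C (L i) + rank (L i) i) :
    (∀ i, 1 ≤ i → i ≤ n → 1 ≤ LF i ∧ LF i ≤ n ∧ sa (LF i) = mod1 (sa i - 1)) ∧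
      Set.BijOn LF (Set.Icc 1 n) (Set.Icc 1 n) := by
  subst hn
  obtain rfl : mod1 = modOne T.length := funext hmod1
  set I := Set.Icc 1 T.length
  have hmono : StrictMonoOn (fun j => T.rotate (sa j - 1)) I :=
    fun i hi j hj hij => hsa_mono i j hi.1 hij hj.2
  have hsa : Set.BijOn sa I I :=
    ((Set.finite_Icc _ _).injOn_iff_bijOn_of_mapsTo fun i hi => hsa_range i hi.1 hi.2).mp
      (Set.InjOn.of_comp (g := fun p => T.rotate (p - 1)) hmono.injOn)
  have hf : Set.BijOn (fun j => sa j - 1) I (Set.Iio T.length) := (bijOn_sub_one _).comp hsa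
  have hg : Set.BijOn (fun j => modOne T.length (sa j - 1) - 1) I (Set.Iio T.length) :=
    ((bijOn_sub_one _).comp (bijOn_modOne_pred _)).comp hsa
  have hLF_spec : ∀ i ∈ I, LF i ∈ I ∧ sa (LF i) = modOne T.length (sa i - 1) := by
    intro i hi
    obtain ⟨k, hk, hki⟩ := hf.surjOn (hg.mapsTo hi)
    obtain rfl : LF i = k := by
      rw [hLF, hC, hrank, ← card_filter_rotate_le_rotate_eq_countP_add hmono hg
        (fun j hj => List.rotate_modOne_pred_sub_one_rotate_one (hsa.mapsTo hj))
        (fun j hj => hL j hj.1 hj.2) hi, ← hki,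
        card_filter_rotate_le_rotate_eq_rank hf hg hmono hk]
    exact ⟨hk, (bijOn_sub_one _).injOn (hsa.mapsTo hk)
      ((bijOn_modOne_pred _).mapsTo (hsa.mapsTo hi)) hki⟩
  refine ⟨fun i hi1 hi2 => ?_, ?_⟩
  · obtain ⟨⟨h1, h2⟩, h⟩ := hLF_spec i ⟨hi1, hi2⟩
    exact ⟨h1, h2, h⟩
  · refine ((Set.finite_Icc _ _).injOn_iff_bijOn_of_mapsTo fun i hi => (hLF_spec i hi).1).mp
      fun a ha b hb hab => hg.injOn ha hb ?_
    simp only [← (hLF_spec a ha).2, ← (hLF_spec b hb).2, hab]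

/-- correctness of the LF mapping.  `T` is a string of length `n` whose
`n` rotations are pairwise (lexicographically) distinct, `sa` is its suffix array
(1-based: `sa i` is the starting position, in `[1..n]`, of the rotation of
lexicographic rank `i`), `L = BWT_T` with `L i = T[sa i − 1 (mod₁ n)]`, `C c` counts
the positions of `T` holding a character strictly smaller than `c`, `rank c i`
counts the occurrences of `c` in `L[1..i]`, and `LF i = C (L i) + rank (L i) i`.
Then `sa (LF i) = sa i − 1 (mod₁ n)` for every `i ∈ [1..n]`; in particular `LF` is a
permutation of `[1..n]`. -/
theorem lf_mapping_correct {α : Type*} [LinearOrder α]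
    (T : List α) (n : ℕ) (hn : T.length = n) (hpos : 1 ≤ n)
    (hdistinct : ∀ i j, i < n → j < n → T.rotate i = T.rotate j → i = j)
    (sa : ℕ → ℕ)
    (hsa_range : ∀ i, 1 ≤ i → i ≤ n → 1 ≤ sa i ∧ sa i ≤ n)
    (hsa_mono : ∀ i j, 1 ≤ i → i < j → j ≤ n →
      List.Lex (· < ·) (T.rotate (sa i - 1)) (T.rotate (sa j - 1)))
    (hsa_surj : ∀ v, 1 ≤ v → v ≤ n → ∃ i, 1 ≤ i ∧ i ≤ n ∧ sa i = v)
    (mod1 : ℕ → ℕ) (hmod1 : ∀ x, mod1 x = if x % n = 0 then n else x % n)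
    (L : ℕ → α)
    (hL : ∀ i, 1 ≤ i → i ≤ n → T[mod1 (sa i - 1) - 1]? = some (L i))
    (C : α → ℕ) (hC : ∀ c, C c = T.countP (fun x => decide (x < c)))
    (rank : α → ℕ → ℕ)
    (hrank : ∀ c i, rank c i = ((Finset.Icc 1 i).filter (fun j => L j = c)).card)
    (LF : ℕ → ℕ) (hLF : ∀ i, LF i = C (L i) + rank (L i) i) :
    (∀ i, 1 ≤ i → i ≤ n → 1 ≤ LF i ∧ LF i ≤ n ∧ sa (LF i) = mod1 (sa i - 1)) ∧
      Set.BijOn LF (Set.Icc 1 n) (Set.Icc 1 n) :=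
  lf_mapping_correct_general T n hn sa hsa_range hsa_mono mod1 hmod1 L hL C hC rank hrank LF hLF
end

section
/- Let T be a string of length n whose n rotations are pairwise lexicographically distinct, let L = BWT_T, and for a string V let I(V) = { i ∈ [1..n] : V is a prefix of the rotation of T of lexicographic rank i }. Suppose V is a string with |V| ≤ n−1 and I(V) is nonempty, say I(V) = [i₁..j₁] (it is an interval of consecutive ranks). Then for every character c, I(cV) = [ C[c] + rank_c(L, i₁−1) + 1 .. C[c] + rank_c(L, j₁) ] (this interval being empty when its left endpoint exceeds its right endpoint). In particular, cV is a prefix of some rotation of T if and only if rank_c(L, j₁) > rank_c(L, i₁−1). (Correctness of one step of backward search.) -/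
/-!
Sort the rotations of `T` into the rows `R 1 < ⋯ < R n`; `L i` is the last character of row `i`.
Rotating row `i` right by one gives the row `σ i` beginning with `L i`. Rows with the same first
character are ordered like the rows they come from, so counting the rows below `σ i` gives the
LF-formula `σ i = C (L i) + rank (L i) (i - 1) + 1`. The rows prefixed by `cV` are exactly the
`σ i` for the rows `i ∈ I(V)` with `L i = c`, and on these `i` the rank of `c` increases by one at
each step, so their images fill a block of consecutive rows.
-/

open Finset

theorem List.append_singleton_lt_append_singleton_iff {α : Type*} [LinearOrder α] (a : α) :
    ∀ {X Y : List α}, X.length = Y.length → (X ++ [a] < Y ++ [a] ↔ X < Y)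
  | [], [], _ => by simp
  | x :: X, y :: Y, h => by
    simp only [List.cons_append, List.cons_lt_cons_iff,
      append_singleton_lt_append_singleton_iff a (Nat.succ_injective h)]

theorem StrictMonoOn.card_filter_lt {β : Type*} [Preorder β] [DecidableLT β] {f : ℕ → β} {n s : ℕ}
    (hf : StrictMonoOn f (Set.Icc 1 n)) (hs : s ∈ Set.Icc 1 n) :
    #{k ∈ Icc 1 n | f k < f s} = s - 1 := by
  rw [filter_congr fun k hk => hf.lt_iff_lt (by simpa using hk) hs, ← Nat.card_Ico 1 s]
  congr 1
  ext k
  simp only [mem_filter, mem_Icc, mem_Ico]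
  have := hs.2
  omega

theorem List.exists_rotate_eq_getElem_cons {α : Type*} (l : List α) {k : ℕ} (hk : k < l.length) :
    ∃ X, l.rotate k = l[k] :: X ∧ l.rotate (k + 1) = X ++ [l[k]] := by
  have hlen : 0 < (l.rotate k).length := by simpa using Nat.zero_lt_of_lt hk
  have hhead : (l.rotate k)[0] = l[k] := by simp [List.getElem_rotate, Nat.mod_eq_of_lt hk]
  obtain ⟨x, X, hX⟩ := List.exists_cons_of_length_pos hlen
  refine ⟨X, ?_, ?_⟩
  · simp_all
  · rw [← List.rotate_rotate, hX, List.rotate_cons_succ, List.rotate_zero]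
    simp_all

theorem List.countP_eq_count_getElem? {α : Type*} (p : α → Bool) :
    ∀ l : List α, l.countP p = Nat.count (fun q => l[q]?.any p) l.length
  | [] => by simp
  | a :: l => by
    rw [List.countP_cons, List.length_cons, Nat.count_succ', List.countP_eq_count_getElem? p l]
    simp

theorem List.countP_eq_card_filter_of_bijOn {α ι : Type*} (l : List α) (p : α → Bool)
    {s : Finset ι} {f : ι → ℕ} {g : ι → α} (hf : Set.BijOn f s (Set.Iio l.length))
    (hg : ∀ i ∈ s, l[f i]? = some (g i)) :
    l.countP p = #{i ∈ s | p (g i)} := by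
  rw [l.countP_eq_count_getElem? p, Nat.count_eq_card_filter_range]
  symm
  refine card_nbij f (fun i hi => ?_) (hf.injOn.mono (coe_subset.mpr (Finset.filter_subset _ s)))
    fun q hq => ?_
  · obtain ⟨hi, hp⟩ := Finset.mem_filter.mp hi
    simpa [hg i hi, hp] using hf.mapsTo hi
  · obtain ⟨hq, hp⟩ := Finset.mem_filter.mp hq
    obtain ⟨i, hi, rfl⟩ := hf.surjOn (by simpa using hq)
    simp only [hg i hi, Option.any_some] at hp
    exact ⟨i, Finset.mem_filter.mpr ⟨hi, hp⟩, rfl⟩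

theorem Nat.count_eq_card_filter_Icc (P : ℕ → Prop) [DecidablePred P] (i : ℕ) :
    Nat.count (fun k => P (k + 1)) i = #{j ∈ Icc 1 i | P j} := by
  rw [Nat.count_eq_card_filter_range]
  refine card_nbij' (· + 1) (· - 1) ?_ ?_ ?_ ?_ <;> intro j <;>
    simp +contextual [Nat.sub_add_cancel]
  omega

theorem Nat.exists_count_eq_iff {P : ℕ → Prop} [DecidablePred P] {a b r : ℕ} :
    (∃ k, a ≤ k ∧ k < b ∧ P k ∧ Nat.count P k = r) ↔ Nat.count P a ≤ r ∧ r < Nat.count P b := by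
  constructor
  · rintro ⟨k, hak, hkb, hk, rfl⟩
    exact ⟨Nat.count_monotone P hak, Nat.count_strict_mono hk hkb⟩
  · induction b with
    | zero => simp
    | succ b ih =>
      rintro ⟨har, hrb⟩
      rw [Nat.count_succ] at hrb
      rcases lt_or_ge r (Nat.count P b) with hr | hr
      · obtain ⟨k, hak, hkb, hk, rfl⟩ := ih ⟨har, hr⟩
        exact ⟨k, hak, by omega, hk, rfl⟩
      · have hPb : P b := by
          by_contra hPb
          rw [if_neg hPb] at hrb
          omega
        rw [if_pos hPb] at hrb
        have hab : Nat.count P a < Nat.count P (b + 1) := by rw [Nat.count_succ, if_pos hPb]; omega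
        exact ⟨b, Nat.le_of_lt_succ (Nat.lt_of_count_lt_count hab), by omega, hPb, by omega⟩

/-- `σ` is the LF-mapping of the rows `R 1, …, R n` with last column `L`: row `σ i` is row `i`
rotated right by one. -/
def IsLFMapping {α : Type*} (n : ℕ) (R : ℕ → List α) (L : ℕ → α) (σ : ℕ → ℕ) : Prop :=
  ∀ i ∈ Set.Icc 1 n, σ i ∈ Set.Icc 1 n ∧ ∃ X, R (σ i) = L i :: X ∧ R i = X ++ [L i]

section LFMapping

variable {α : Type*} [LinearOrder α] {n : ℕ} {R : ℕ → List α} {L : ℕ → α} {σ : ℕ → ℕ}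

namespace IsLFMapping

theorem injOn (hσ : IsLFMapping n R L σ) (hR : StrictMonoOn R (Set.Icc 1 n)) :
    Set.InjOn σ (Set.Icc 1 n) := by
  intro i hi j hj hij
  obtain ⟨-, X, hXi, hRi⟩ := hσ i hi
  obtain ⟨-, Y, hYj, hRj⟩ := hσ j hj
  rw [hij, hYj, List.cons.injEq] at hXi
  apply hR.injOn hi hj
  rw [hRi, hRj, hXi.1, hXi.2]

theorem bijOn (hσ : IsLFMapping n R L σ) (hR : StrictMonoOn R (Set.Icc 1 n)) :
    Set.BijOn σ (Set.Icc 1 n) (Set.Icc 1 n) :=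
  ((Set.finite_Icc 1 n).injOn_iff_bijOn_of_mapsTo fun i hi => (hσ i hi).1).mp (hσ.injOn hR)

theorem lt_iff (hσ : IsLFMapping n R L σ) (hR : StrictMonoOn R (Set.Icc 1 n)) {m : ℕ}
    (hlen : ∀ i ∈ Set.Icc 1 n, (R i).length = m) {i j : ℕ}
    (hi : i ∈ Set.Icc 1 n) (hj : j ∈ Set.Icc 1 n) :
    R (σ j) < R (σ i) ↔ L j < L i ∨ L j = L i ∧ j < i := by
  obtain ⟨-, X, hXi, hRi⟩ := hσ i hi
  obtain ⟨-, Y, hYj, hRj⟩ := hσ j hj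
  rw [hXi, hYj, List.cons_lt_cons_iff, ← hR.lt_iff_lt hj hi]
  refine or_congr_right (and_congr_right fun hL => ?_)
  have hXY : Y.length = X.length := by
    have hXm := hlen i hi
    have hYm := hlen j hj
    rw [hRi, List.length_append] at hXm
    rw [hRj, List.length_append] at hYm
    simp only [List.length_singleton] at hXm hYm
    omega
  rw [hRi, hRj, hL, List.append_singleton_lt_append_singleton_iff _ hXY]

theorem eq_card_add_count (hσ : IsLFMapping n R L σ) (hR : StrictMonoOn R (Set.Icc 1 n)) {m : ℕ}
    (hlen : ∀ i ∈ Set.Icc 1 n, (R i).length = m) {i : ℕ} (hi : i ∈ Set.Icc 1 n) :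
    σ i = #{j ∈ Icc 1 n | L j < L i} + Nat.count (fun k => L (k + 1) = L i) (i - 1) + 1 := by
  have himage : (Icc 1 n).image σ = Icc 1 n := by
    rw [← coe_inj, coe_image, coe_Icc]
    exact (hσ.bijOn hR).image_eq
  have hcount :
      #{j ∈ Icc 1 n | L j = L i ∧ j < i} = Nat.count (fun k => L (k + 1) = L i) (i - 1) := by
    rw [Nat.count_eq_card_filter_Icc (L · = L i)]
    congr 1
    ext j
    have := hi.2
    by_cases hLj : L j = L i
    · simp only [mem_filter, mem_Icc, hLj, true_and, and_true]
      omega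
    · simp [hLj]
  calc σ i = #{k ∈ Icc 1 n | R k < R (σ i)} + 1 := by
        rw [hR.card_filter_lt (hσ i hi).1]
        have := (hσ i hi).1.1
        omega
    _ = #{j ∈ Icc 1 n | R (σ j) < R (σ i)} + 1 := by
        nth_rw 1 [← himage]
        rw [filter_image, card_image_of_injOn
          ((hσ.injOn hR).mono fun j hj => by simpa using (mem_filter.mp hj).1)]
    _ = #{j ∈ Icc 1 n | L j < L i ∨ L j = L i ∧ j < i} + 1 := by
        rw [filter_congr fun j hj => hσ.lt_iff hR hlen hi (by simpa using hj)]
    _ = _ := by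
        rw [filter_or, card_union_of_disjoint (disjoint_filter.mpr fun j _ hlt heq => hlt.ne heq.1),
          hcount]

theorem cons_prefix_iff (hσ : IsLFMapping n R L σ) (hR : StrictMonoOn R (Set.Icc 1 n))
    {V : List α} (hV : ∀ i ∈ Set.Icc 1 n, V.length < (R i).length) {c : α} {s : ℕ} :
    s ∈ Set.Icc 1 n ∧ c :: V <+: R s ↔ ∃ i ∈ Set.Icc 1 n, V <+: R i ∧ L i = c ∧ σ i = s := by
  constructor
  · rintro ⟨hs, hpre⟩
    obtain ⟨i, hi, rfl⟩ := (hσ.bijOn hR).surjOn hs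
    obtain ⟨-, X, hXi, hRi⟩ := hσ i hi
    rw [hXi, List.cons_prefix_cons] at hpre
    exact ⟨i, hi, hRi ▸ hpre.2.trans (List.prefix_append _ _), hpre.1.symm, rfl⟩
  · rintro ⟨i, hi, hpre, rfl, rfl⟩
    obtain ⟨hσi, X, hXi, hRi⟩ := hσ i hi
    have hVX : V.length ≤ X.length := by simpa [hRi] using hV i hi
    rw [hRi] at hpre
    exact ⟨hσi, hXi ▸ List.cons_prefix_cons.mpr
      ⟨rfl, List.prefix_of_prefix_length_le hpre (List.prefix_append _ _) hVX⟩⟩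

theorem setOf_cons_prefix_eq_Icc (hσ : IsLFMapping n R L σ) (hR : StrictMonoOn R (Set.Icc 1 n))
    {m : ℕ} (hlen : ∀ i ∈ Set.Icc 1 n, (R i).length = m)
    {V : List α} (hV : ∀ i ∈ Set.Icc 1 n, V.length < (R i).length)
    {i₁ j₁ : ℕ} (hIV : {i | i ∈ Set.Icc 1 n ∧ V <+: R i} = Set.Icc i₁ j₁) (c : α) :
    {i | i ∈ Set.Icc 1 n ∧ c :: V <+: R i} =
      Set.Icc (#{j ∈ Icc 1 n | L j < c} + Nat.count (fun k => L (k + 1) = c) (i₁ - 1) + 1)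
        (#{j ∈ Icc 1 n | L j < c} + Nat.count (fun k => L (k + 1) = c) j₁) := by
  set C := #{j ∈ Icc 1 n | L j < c}
  have hmemV (i : ℕ) : i ∈ Set.Icc 1 n ∧ V <+: R i ↔ i ∈ Set.Icc i₁ j₁ := Set.ext_iff.mp hIV i
  -- `Nat.count` is 0-based while rows are 1-based: row `i` corresponds to `k = i - 1`.
  have hshift (s : ℕ) : (∃ i ∈ Set.Icc 1 n, V <+: R i ∧ L i = c ∧ σ i = s) ↔
      ∃ k, i₁ - 1 ≤ k ∧ k < j₁ ∧ L (k + 1) = c ∧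
        C + Nat.count (fun k => L (k + 1) = c) k + 1 = s := by
    constructor
    · rintro ⟨i, hi, hVi, rfl, rfl⟩
      have hi' := (hmemV i).mp ⟨hi, hVi⟩
      refine ⟨i - 1, by grind, by grind, by grind, ?_⟩
      rw [hσ.eq_card_add_count hR hlen hi]
    · rintro ⟨k, hk₁, hkj, hPk, rfl⟩
      obtain ⟨hk, hVk⟩ := (hmemV (k + 1)).mpr ⟨by omega, by omega⟩
      exact ⟨k + 1, hk, hVk, hPk, by rw [hσ.eq_card_add_count hR hlen hk, hPk]; rfl⟩
  ext s
  rw [Set.mem_ofPred_eq, hσ.cons_prefix_iff hR hV, hshift, Set.mem_Icc]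
  obtain hs | ⟨r, rfl⟩ : s < C + 1 ∨ ∃ r, s = C + r + 1 :=
    (lt_or_ge s (C + 1)).imp_right fun h => ⟨s - C - 1, by omega⟩
  · constructor
    · rintro ⟨k, -, -, -, rfl⟩
      omega
    · omega
  · simp only [Nat.add_right_cancel_iff, Nat.add_left_cancel_iff, Nat.exists_count_eq_iff]
    omega

end IsLFMapping

end LFMapping

section Rotations

variable {α : Type*} {T : List α} {n : ℕ} {sa : ℕ → ℕ}

theorem exists_isLFMapping_rotate (hn : T.length = n)
    (hsa_surj : ∀ v, 1 ≤ v → v ≤ n → ∃ i, 1 ≤ i ∧ i ≤ n ∧ sa i = v)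
    {mod1 : ℕ → ℕ} (hmod1 : ∀ x, mod1 x = if x % n = 0 then n else x % n)
    {L : ℕ → α} (hL : ∀ i, 1 ≤ i → i ≤ n → T[mod1 (sa i - 1) - 1]? = some (L i)) :
    ∃ σ, IsLFMapping n (fun i => T.rotate (sa i - 1)) L σ ∧
      ∀ i ∈ Set.Icc 1 n, T[sa (σ i) - 1]? = some (L i) := by
  have hrow (i : ℕ) : ∃ s, i ∈ Set.Icc 1 n → s ∈ Set.Icc 1 n ∧ sa s = mod1 (sa i - 1) ∧
      ∃ X, T.rotate (sa s - 1) = L i :: X ∧ T.rotate (sa i - 1) = X ++ [L i] := by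
    by_cases hi : i ∈ Set.Icc 1 n
    · have hn0 : 0 < n := lt_of_lt_of_le hi.1 hi.2
      set x := sa i - 1
      have hmod : 1 ≤ mod1 x ∧ mod1 x ≤ n ∧ mod1 x % n = x % n := by
        rw [hmod1]
        split_ifs with hx
        · exact ⟨hn0, le_rfl, by rw [Nat.mod_self, hx]⟩
        · exact ⟨Nat.pos_of_ne_zero hx, (Nat.mod_lt x hn0).le, Nat.mod_mod x n⟩
      obtain ⟨s, hs1, hsn, hsa⟩ := hsa_surj (mod1 x) hmod.1 hmod.2.1
      obtain ⟨X, hX, hX'⟩ := T.exists_rotate_eq_getElem_cons (k := mod1 x - 1) (by omega)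
      have hLi : T[mod1 x - 1] = L i := by
        have h := hL i hi.1 hi.2
        rwa [List.getElem?_eq_getElem, Option.some_inj] at h
      refine ⟨s, fun _ => ⟨⟨hs1, hsn⟩, hsa, X, by rw [hsa, ← hLi, hX], ?_⟩⟩
      rw [← hLi, ← hX', Nat.sub_add_cancel hmod.1, ← T.rotate_mod x, ← T.rotate_mod (mod1 x), hn,
        hmod.2.2]
    · exact ⟨0, fun h => absurd h hi⟩
  choose σ hσ using hrow
  refine ⟨σ, fun i hi => ⟨(hσ i hi).1, (hσ i hi).2.2⟩, fun i hi => ?_⟩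
  rw [(hσ i hi).2.1]
  exact hL i hi.1 hi.2

theorem countP_eq_card_filter_of_isLFMapping [LinearOrder α] (hn : T.length = n)
    (hR : StrictMonoOn (fun i => T.rotate (sa i - 1)) (Set.Icc 1 n))
    (hsa_surj : ∀ v, 1 ≤ v → v ≤ n → ∃ i, 1 ≤ i ∧ i ≤ n ∧ sa i = v)
    {L : ℕ → α} {σ : ℕ → ℕ} (hσ : IsLFMapping n (fun i => T.rotate (sa i - 1)) L σ)
    (hσL : ∀ i ∈ Set.Icc 1 n, T[sa (σ i) - 1]? = some (L i)) (p : α → Bool) :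
    T.countP p = #{j ∈ Icc 1 n | p (L j)} := by
  refine T.countP_eq_card_filter_of_bijOn p (f := fun j => sa (σ j) - 1) ?_ (by simpa using hσL)
  rw [coe_Icc]
  refine ⟨fun j hj => ?_, fun j hj j' hj' h => ?_, fun q hq => ?_⟩
  · exact (List.getElem?_eq_some_iff.mp (hσL j hj)).1
  · exact hσ.injOn hR hj hj' (hR.injOn (hσ j hj).1 (hσ j' hj').1 (by simp only [h]))
  · obtain ⟨s, hs1, hsn, hsq⟩ := hsa_surj (q + 1) (by omega) (by simpa [hn] using hq)
    obtain ⟨j, hj, rfl⟩ := (hσ.bijOn hR).surjOn ⟨hs1, hsn⟩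
    exact ⟨j, hj, by simp [hsq]⟩

theorem exists_prefix_rotate_iff_nonempty (hn : T.length = n)
    (hsa_surj : ∀ v, 1 ≤ v → v ≤ n → ∃ i, 1 ≤ i ∧ i ≤ n ∧ sa i = v) (W : List α) :
    (∃ k, k < n ∧ W <+: T.rotate k) ↔
      {i | i ∈ Set.Icc 1 n ∧ W <+: T.rotate (sa i - 1)}.Nonempty := by
  constructor
  · rintro ⟨k, hk, hW⟩
    obtain ⟨i, hi1, hin, hik⟩ := hsa_surj (k + 1) (by omega) hk
    exact ⟨i, ⟨hi1, hin⟩, by simpa [hik] using hW⟩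
  · rintro ⟨i, hi, hW⟩
    refine ⟨(sa i - 1) % n, Nat.mod_lt _ (lt_of_lt_of_le hi.1 hi.2), ?_⟩
    rwa [← hn, List.rotate_mod]

end Rotations

theorem backward_search_step_general {α : Type*} [LinearOrder α]
    (T : List α) (n : ℕ) (hn : T.length = n)
    (sa : ℕ → ℕ)
    (hsa_mono : ∀ i j, 1 ≤ i → i < j → j ≤ n →
      List.Lex (· < ·) (T.rotate (sa i - 1)) (T.rotate (sa j - 1)))
    (hsa_surj : ∀ v, 1 ≤ v → v ≤ n → ∃ i, 1 ≤ i ∧ i ≤ n ∧ sa i = v)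
    (mod1 : ℕ → ℕ) (hmod1 : ∀ x, mod1 x = if x % n = 0 then n else x % n)
    (L : ℕ → α)
    (hL : ∀ i, 1 ≤ i → i ≤ n → T[mod1 (sa i - 1) - 1]? = some (L i))
    (C : α → ℕ) (hC : ∀ c, C c = T.countP (fun x => decide (x < c)))
    (rank : α → ℕ → ℕ)
    (hrank : ∀ c i, rank c i = ((Finset.Icc 1 i).filter (fun j => L j = c)).card)
    (I : List α → Set ℕ)
    (hI : ∀ W, I W = {i | 1 ≤ i ∧ i ≤ n ∧ W <+: T.rotate (sa i - 1)})
    (V : List α) (hVlen : V.length ≤ n - 1)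
    (i₁ j₁ : ℕ) (hIV : I V = Set.Icc i₁ j₁) :
    ∀ c : α,
      I (c :: V) = Set.Icc (C c + rank c (i₁ - 1) + 1) (C c + rank c j₁) ∧
      ((∃ i, i < n ∧ (c :: V) <+: T.rotate i) ↔ rank c (i₁ - 1) < rank c j₁) := by
  intro c
  set R : ℕ → List α := fun i => T.rotate (sa i - 1)
  have hR : StrictMonoOn R (Set.Icc 1 n) := fun i hi j hj hij => hsa_mono i j hi.1 hij hj.2
  have hlen (i : ℕ) : (R i).length = n := by simp [R, hn]
  have hIR (W : List α) : I W = {i | i ∈ Set.Icc 1 n ∧ W <+: R i} := by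
    simp only [hI, Set.mem_Icc, and_assoc, R]
  obtain ⟨σ, hσ, hσL⟩ := exists_isLFMapping_rotate hn hsa_surj hmod1 hL
  have hCc : C c = #{j ∈ Icc 1 n | L j < c} := by
    rw [hC, countP_eq_card_filter_of_isLFMapping hn hR hsa_surj hσ hσL]
    simp
  have hrankc (i : ℕ) : rank c i = Nat.count (fun k => L (k + 1) = c) i := by
    rw [hrank, Nat.count_eq_card_filter_Icc (L · = c)]
  have hIcV : I (c :: V) = Set.Icc (C c + rank c (i₁ - 1) + 1) (C c + rank c j₁) := by
    rw [hIR, hσ.setOf_cons_prefix_eq_Icc hR (fun i _ => hlen i)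
      (fun i hi => by rw [hlen]; have := hi.1.trans hi.2; omega) (hIR V ▸ hIV) c, hCc, hrankc,
      hrankc]
  refine ⟨hIcV, ?_⟩
  rw [exists_prefix_rotate_iff_nonempty hn hsa_surj, ← hIR, hIcV, Set.nonempty_Icc]
  omega

/-- correctness of one step of backward search.  With the suffix array
`sa`, the BWT `L`, the array `C` and the rank function as in the context, if
`I(V) = [i₁..j₁]` is the (nonempty) interval of ranks of the rotations prefixed by a
string `V` with `|V| ≤ n − 1`, then for every character `c` the interval of `cV` is
`[C c + rank c (i₁−1) + 1 .. C c + rank c j₁]`; in particular `cV` is a prefix of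
some rotation of `T` iff `rank c j₁ > rank c (i₁−1)`. -/
theorem backward_search_step {α : Type*} [LinearOrder α]
    (T : List α) (n : ℕ) (hn : T.length = n) (hpos : 1 ≤ n)
    (hdistinct : ∀ i j, i < n → j < n → T.rotate i = T.rotate j → i = j)
    (sa : ℕ → ℕ)
    (hsa_range : ∀ i, 1 ≤ i → i ≤ n → 1 ≤ sa i ∧ sa i ≤ n)
    (hsa_mono : ∀ i j, 1 ≤ i → i < j → j ≤ n →
      List.Lex (· < ·) (T.rotate (sa i - 1)) (T.rotate (sa j - 1)))
    (hsa_surj : ∀ v, 1 ≤ v → v ≤ n → ∃ i, 1 ≤ i ∧ i ≤ n ∧ sa i = v)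
    (mod1 : ℕ → ℕ) (hmod1 : ∀ x, mod1 x = if x % n = 0 then n else x % n)
    (L : ℕ → α)
    (hL : ∀ i, 1 ≤ i → i ≤ n → T[mod1 (sa i - 1) - 1]? = some (L i))
    (C : α → ℕ) (hC : ∀ c, C c = T.countP (fun x => decide (x < c)))
    (rank : α → ℕ → ℕ)
    (hrank : ∀ c i, rank c i = ((Finset.Icc 1 i).filter (fun j => L j = c)).card)
    (I : List α → Set ℕ)
    (hI : ∀ W, I W = {i | 1 ≤ i ∧ i ≤ n ∧ W <+: T.rotate (sa i - 1)})
    (V : List α) (hVlen : V.length ≤ n - 1)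
    (i₁ j₁ : ℕ) (hij : i₁ ≤ j₁) (hIV : I V = Set.Icc i₁ j₁) :
    ∀ c : α,
      I (c :: V) = Set.Icc (C c + rank c (i₁ - 1) + 1) (C c + rank c j₁) ∧
      ((∃ i, i < n ∧ (c :: V) <+: T.rotate i) ↔ rank c (i₁ - 1) < rank c j₁) :=
  backward_search_step_general T n hn sa hsa_mono hsa_surj mod1 hmod1 L hL C hC rank hrank I hI V
    hVlen i₁ j₁ hIV
end

section
/- Let T ∈ Σ^n, let # ∉ Σ be strictly smaller than every character of Σ, and let T# be T with # appended. If aWb is a minimal absent word of T, where a, b ∈ Σ and W is a string over Σ, then W is a maximal repeat of T#, i.e., W is both a left-maximal repeat and a right-maximal repeat of T#. (Only a maximal repeat of T can be the infix W of a minimal absent word aWb.) -/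
/-- `W` is a minimal absent word of `T`. -/
def IsMinimalAbsentWord {α : Type*} (T W : List α) : Prop :=
  ¬ (W <:+: T) ∧ ∀ V, V <:+: W → V.length < W.length → V <:+: T

/-!
If `aWb` is absent from `T` but `aW` and `Wb` occur in it, then `W` occurs followed by a letter
other than `b`: after the occurrence of `aW` comes either a letter `c ≠ b`, or the end of `T`,
where the terminator `#` follows in `T#`. Symmetrically `W` occurs preceded by a letter other
than `a`, namely by `#` in the rotation `#T` when `Wb` is a prefix of `T`. Two occurrences of `W`
with different neighbours start at different rotations, so `W` is left- and right-maximal.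
-/

section

variable {α : Type*}

/-- `U` is a factor of the circular word `T`. -/
def IsCyclicInfix (U T : List α) : Prop :=
  ∃ i < T.length, U <+: T.rotate i

theorem List.IsInfix.isCyclicInfix {U T : List α} (h : U <:+: T) (hU : U ≠ []) :
    IsCyclicInfix U T := by
  obtain ⟨s, t, rfl⟩ := h
  have hUl : 0 < U.length := List.length_pos_iff.mpr hU
  refine ⟨s.length, by simp; omega, ?_⟩
  rw [List.rotate_eq_drop_append_take (by simp), List.append_assoc, List.drop_left,
    List.take_left, List.append_assoc]
  exact List.prefix_append _ _

theorem List.IsPrefix.eq_of_length_eq {U V L : List α} (hU : U <+: L) (hV : V <+: L)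
    (h : U.length = V.length) : U = V :=
  (List.prefix_of_prefix_length_le hU hV h.le).eq_of_length h

theorem isRightMaximalRepeat_of_isCyclicInfix {T W : List α} {a b : α}
    (hW : W.length < T.length) (hab : a ≠ b)
    (ha : IsCyclicInfix (W ++ [a]) T) (hb : IsCyclicInfix (W ++ [b]) T) :
    IsRightMaximalRepeat T W := by
  obtain ⟨i, hi, hpi⟩ := ha
  obtain ⟨j, hj, hpj⟩ := hb
  refine ⟨hW, i, j, a, b, hi, hj, ?_, hab, hpi, hpj⟩
  rintro rfl
  exact hab (by simpa using hpi.eq_of_length_eq hpj (by simp))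

theorem isLeftMaximalRepeat_of_isCyclicInfix {T W : List α} {a b : α}
    (hW : W.length < T.length) (hab : a ≠ b)
    (ha : IsCyclicInfix (a :: W) T) (hb : IsCyclicInfix (b :: W) T) :
    IsLeftMaximalRepeat T W := by
  obtain ⟨i, hi, hpi⟩ := ha
  obtain ⟨j, hj, hpj⟩ := hb
  refine ⟨hW, i, j, a, b, hi, hj, ?_, hab, hpi, hpj⟩
  rintro rfl
  exact hab (by simpa using hpi.eq_of_length_eq hpj (by simp))

namespace IsMinimalAbsentWord

variable {T W : List α} {a b : α}

theorem cons_infix (h : IsMinimalAbsentWord T (a :: (W ++ [b]))) : (a :: W) <:+: T :=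
  h.2 _ (List.cons_prefix_cons.mpr ⟨rfl, List.prefix_append W [b]⟩).isInfix (by simp)

theorem append_infix (h : IsMinimalAbsentWord T (a :: (W ++ [b]))) : (W ++ [b]) <:+: T :=
  h.2 _ (List.suffix_cons a (W ++ [b])).isInfix (by simp)

theorem exists_ne_append_infix_append (h : IsMinimalAbsentWord T (a :: (W ++ [b])))
    {x : α} (hx : x ≠ b) : ∃ c ≠ b, (W ++ [c]) <:+: T ++ [x] := by
  obtain ⟨s, t, hst⟩ := h.cons_infix
  cases t with
  | nil => exact ⟨x, hx, s ++ [a], [], by rw [← hst]; simp⟩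
  | cons c t =>
    refine ⟨c, ?_, List.IsInfix.trans ⟨s ++ [a], t, by rw [← hst]; simp⟩
      (List.prefix_append T [x]).isInfix⟩
    rintro rfl
    exact h.1 ⟨s, t, by rw [← hst]; simp⟩

theorem exists_ne_isCyclicInfix_cons (h : IsMinimalAbsentWord T (a :: (W ++ [b])))
    {x : α} (hx : x ≠ a) : ∃ c ≠ a, IsCyclicInfix (c :: W) (T ++ [x]) := by
  obtain ⟨s, t, hst⟩ := h.append_infix
  rcases s.eq_nil_or_concat with rfl | ⟨s, c, rfl⟩
  · refine ⟨x, hx, T.length, by simp, ?_⟩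
    rw [List.rotate_eq_drop_append_take (by simp), List.drop_left, List.take_left]
    exact List.cons_prefix_cons.mpr ⟨rfl, [b] ++ t, by rw [← hst]; simp⟩
  · refine ⟨c, ?_, List.IsInfix.isCyclicInfix ?_ (List.cons_ne_nil c W)⟩
    · rintro rfl
      exact h.1 ⟨s, t, by rw [← hst]; simp⟩
    · exact List.IsInfix.trans ⟨s, [b] ++ t, by rw [← hst]; simp⟩
        (List.prefix_append T [x]).isInfix

end IsMinimalAbsentWord

end

theorem maw_infix_isMaximalRepeat_general {α : Type*} [LinearOrder α]
    (T : List α)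
    (hash : α)
    (a b : α) (ha : hash < a) (hb : hash < b) (W : List α)
    (hmaw : IsMinimalAbsentWord T (a :: (W ++ [b]))) :
    IsLeftMaximalRepeat (T ++ [hash]) W ∧ IsRightMaximalRepeat (T ++ [hash]) W := by
  have hW : W.length < (T ++ [hash]).length := by
    have := hmaw.cons_infix.length_le
    simp only [List.length_cons, List.length_append] at this ⊢
    omega
  have haW : IsCyclicInfix (a :: W) (T ++ [hash]) :=
    (hmaw.cons_infix.trans (List.prefix_append T [hash]).isInfix).isCyclicInfix (by simp)
  have hWb : IsCyclicInfix (W ++ [b]) (T ++ [hash]) :=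
    (hmaw.append_infix.trans (List.prefix_append T [hash]).isInfix).isCyclicInfix (by simp)
  obtain ⟨c, hca, hcW⟩ := hmaw.exists_ne_isCyclicInfix_cons ha.ne
  obtain ⟨d, hdb, hWd⟩ := hmaw.exists_ne_append_infix_append hb.ne
  exact ⟨isLeftMaximalRepeat_of_isCyclicInfix hW (Ne.symm hca) haW hcW,
    isRightMaximalRepeat_of_isCyclicInfix hW hdb (hWd.isCyclicInfix (by simp)) hWb⟩

/-- if `aWb` is a minimal absent word of `T`, where the terminator `#`
is strictly smaller than every character of the alphabet, then `W` is a maximal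
repeat of `T#`, i.e. both a left-maximal and a right-maximal repeat of `T#`. -/
theorem maw_infix_isMaximalRepeat {α : Type*} [LinearOrder α]
    (T : List α) (n : ℕ) (hn : T.length = n)
    (hash : α) (hhashT : ∀ c ∈ T, hash < c)
    (a b : α) (ha : hash < a) (hb : hash < b) (W : List α)
    (hmaw : IsMinimalAbsentWord T (a :: (W ++ [b]))) :
    IsLeftMaximalRepeat (T ++ [hash]) W ∧ IsRightMaximalRepeat (T ++ [hash]) W :=
  maw_infix_isMaximalRepeat_general T hash a b ha hb W hmaw
end

section
/- Let T ∈ Σ^n, let # ∉ Σ, and let T# be T with # appended. For a factor W of T# not containing #, let r(W) be the number of distinct characters c ∈ Σ ∪ {#} such that W·c is a factor of T#, and call W right-maximal in T# if r(W) ≥ 2 (equivalently, W occurs at two positions of T# followed by distinct characters). Then for every integer 1 ≤ k ≤ n, the number of distinct strings of length k over Σ that are factors of T equals (n + 1 − k) + Σ_{W} (1 − r(W)), where the (finite) sum ranges over all right-maximal factors W of T# not containing # with |W| ≥ k. (Telescoping identity underlying the computation of the k-mer complexity C(T,k).) -/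
/-!
Write `f m` for the number of distinct length-`m` factors of `T`. A factor of length `m + 1` of
`T#` is `W·c` with `W` a length-`m` factor of `T` and `c` one of its `r W` right extensions, and
exactly one of them (the suffix ending in `#`) is not a factor of `T`; hence
`∑_{|W| = m} r W = f (m + 1) + 1`, i.e. `f m - f (m + 1) - 1 = ∑_{|W| = m} (1 - r W)`.
Only right-maximal `W` contribute since `r W ≥ 1`, and summing over `m = k, …, n` telescopes
because `f (n + 1) = 0`.
-/

open Finset

namespace List

variable {α : Type*} {W L : List α} {x : α}

theorem dropLast_infix_of_infix_concat (h : W <:+: L ++ [x]) : W.dropLast <:+: L := by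
  rcases infix_concat_iff.mp h with hs | hi
  · rcases suffix_concat_iff.mp hs with rfl | ⟨t, rfl, ht⟩
    · exact nil_infix
    · simpa using ht.isInfix
  · exact (dropLast_prefix W).isInfix.trans hi

theorem notMem_and_infix_concat_iff (hx : x ∉ L) : x ∉ W ∧ W <:+: L ++ [x] ↔ W <:+: L := by
  refine ⟨fun ⟨hxW, h⟩ => ?_, fun h => ⟨fun hxW => hx (h.subset hxW),
    h.trans (prefix_append L [x]).isInfix⟩⟩
  rcases infix_concat_iff.mp h with hs | hi
  · rcases suffix_concat_iff.mp hs with rfl | ⟨t, rfl, -⟩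
    · exact nil_infix
    · simp at hxW
  · exact hi

theorem IsInfix.exists_concat_infix_concat (h : W <:+: L) (x : α) :
    ∃ c, W ++ [c] <:+: L ++ [x] := by
  obtain ⟨s, t, rfl⟩ := h
  cases t with
  | nil => exact ⟨x, s, [], by simp⟩
  | cons c t => exact ⟨c, s, t ++ [x], by simp⟩

end List

section Factors

variable {α : Type*} [DecidableEq α]

def factorsOfLength (L : List α) (m : ℕ) : Finset (List α) :=
  {W ∈ L.sublists.toFinset | W.length = m ∧ W <:+: L}

def rightExtensions (L W : List α) : Finset α :=
  {c ∈ L.toFinset | W ++ [c] <:+: L}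

@[simp]
theorem mem_factorsOfLength {L W : List α} {m : ℕ} :
    W ∈ factorsOfLength L m ↔ W.length = m ∧ W <:+: L := by
  simpa [factorsOfLength] using fun _ h => h.sublist

@[simp]
theorem mem_rightExtensions {L W : List α} {c : α} :
    c ∈ rightExtensions L W ↔ W ++ [c] <:+: L := by
  simpa [rightExtensions] using fun h => h.subset (by simp)

theorem coe_factorsOfLength (L : List α) (m : ℕ) :
    (factorsOfLength L m : Set (List α)) = {W | W.length = m ∧ W <:+: L} := by
  ext; simp

theorem coe_rightExtensions (L W : List α) :
    (rightExtensions L W : Set α) = {c | W ++ [c] <:+: L} := by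
  ext; simp

theorem factorsOfLength_eq_empty {L : List α} {m : ℕ} (h : L.length < m) :
    factorsOfLength L m = ∅ := by
  ext W
  simp only [mem_factorsOfLength, notMem_empty, iff_false, not_and]
  rintro rfl hW
  exact h.not_ge hW.length_le

theorem pairwiseDisjoint_factorsOfLength (L : List α) (s : Set ℕ) :
    s.PairwiseDisjoint (factorsOfLength L) :=
  fun _ _ _ _ hne => disjoint_left.mpr fun _ h₁ h₂ =>
    hne ((mem_factorsOfLength.mp h₁).1.symm.trans (mem_factorsOfLength.mp h₂).1)

theorem one_le_card_rightExtensions {L W : List α} (h : W <:+: L) (x : α) :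
    1 ≤ (rightExtensions (L ++ [x]) W).card := by
  obtain ⟨c, hc⟩ := h.exists_concat_infix_concat x
  exact card_pos.mpr ⟨c, mem_rightExtensions.mpr hc⟩

theorem filter_dropLast_factorsOfLength_eq_image {M W : List α} {m : ℕ} (hW : W.length = m) :
    {V ∈ factorsOfLength M (m + 1) | V.dropLast = W} = (rightExtensions M W).image (W ++ [·]) := by
  ext V
  simp only [mem_filter, mem_factorsOfLength, mem_image, mem_rightExtensions]
  constructor
  · rintro ⟨⟨hlen, hV⟩, rfl⟩
    have hne : V ≠ [] := List.ne_nil_of_length_eq_add_one hlen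
    exact ⟨V.getLast hne, by rwa [V.dropLast_concat_getLast hne],
      V.dropLast_concat_getLast hne⟩
  · rintro ⟨c, hc, rfl⟩
    simp [hW, hc]

/-- Every factor of length `m + 1` of `L ++ [x]` is `W ++ [c]` for a unique factor `W` of length
`m` of `L` and a unique right extension `c` of `W`. -/
theorem sum_card_rightExtensions (L : List α) (x : α) (m : ℕ) :
    ∑ W ∈ factorsOfLength L m, (rightExtensions (L ++ [x]) W).card
      = (factorsOfLength (L ++ [x]) (m + 1)).card := by
  rw [card_eq_sum_card_fiberwise (f := List.dropLast) (t := factorsOfLength L m)]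
  · refine sum_congr rfl fun W hW => ?_
    rw [filter_dropLast_factorsOfLength_eq_image (mem_factorsOfLength.mp hW).1,
      card_image_of_injective _ fun c d h => by simpa using h]
  · intro V hV
    obtain ⟨hlen, hV⟩ := mem_factorsOfLength.mp hV
    exact mem_factorsOfLength.mpr ⟨by simp [hlen], List.dropLast_infix_of_infix_concat hV⟩

theorem card_factorsOfLength_concat {L : List α} {x : α} (hx : x ∉ L) {m : ℕ}
    (hm : m ≤ L.length) :
    (factorsOfLength (L ++ [x]) (m + 1)).card = (factorsOfLength L (m + 1)).card + 1 := by
  set S := (L ++ [x]).drop (L.length - m) with hS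
  have hSlen : S.length = m + 1 := by simp [hS]; omega
  have hxS : x ∈ S := by simp [hS, List.drop_append_of_le_length (Nat.sub_le L.length m)]
  have hSL : S ∉ factorsOfLength L (m + 1) :=
    fun h => hx ((mem_factorsOfLength.mp h).2.subset hxS)
  rw [← card_cons hSL]
  congr 1
  ext V
  simp only [mem_cons, mem_factorsOfLength, List.infix_concat_iff]
  constructor
  · rintro ⟨hlen, hsuf | hinf⟩
    · refine Or.inl ((List.suffix_iff_eq_drop.mp hsuf).trans ?_)
      rw [hS, hlen, List.length_append, List.length_singleton, Nat.add_sub_add_right]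
    · exact Or.inr ⟨hlen, hinf⟩
  · rintro (rfl | ⟨hlen, hinf⟩)
    · exact ⟨hSlen, Or.inl (List.drop_suffix _ _)⟩
    · exact ⟨hlen, Or.inr hinf⟩

theorem sum_one_sub_card_rightExtensions {L : List α} {x : α} (hx : x ∉ L) {m : ℕ}
    (hm : m ≤ L.length) :
    ∑ W ∈ factorsOfLength L m, (1 - ((rightExtensions (L ++ [x]) W).card : ℤ))
      = (factorsOfLength L m).card - (factorsOfLength L (m + 1)).card - 1 := by
  rw [sum_sub_distrib, ← Nat.cast_sum, sum_card_rightExtensions,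
    card_factorsOfLength_concat hx hm]
  simp only [sum_const, Int.nsmul_eq_mul, mul_one, Nat.cast_add, Nat.cast_one]
  ring

theorem card_factorsOfLength_eq_add_sum {L : List α} {x : α} (hx : x ∉ L) {k : ℕ}
    (hk : k ≤ L.length + 1) :
    ((factorsOfLength L k).card : ℤ) = (L.length + 1 - k : ℤ) +
      ∑ m ∈ Ico k (L.length + 1), ∑ W ∈ factorsOfLength L m,
        (1 - ((rightExtensions (L ++ [x]) W).card : ℤ)) := by
  have htel := sum_Ico_sub (f := fun m => ((factorsOfLength L m).card : ℤ)) hk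
  rw [factorsOfLength_eq_empty (Nat.lt_succ_self _), card_empty, sum_sub_distrib] at htel
  rw [sum_congr rfl fun m hm => sum_one_sub_card_rightExtensions hx (by simp at hm; omega),
    sum_sub_distrib, sum_sub_distrib, sum_const, Nat.card_Ico, nsmul_one, Nat.cast_sub hk]
  push_cast at htel ⊢
  linarith

end Factors

theorem kmer_complexity_telescoping_general {α : Type*} (T : List α) (n : ℕ)
    (hn : T.length = n) (hash : α) (hhash : hash ∉ T)
    (r : List α → ℕ)
    (hr : ∀ W, r W = {c : α | (W ++ [c]) <:+: (T ++ [hash])}.ncard)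
    (k : ℕ) (hkn : k ≤ n) :
    ({W : List α | W.length = k ∧ W <:+: T}.ncard : ℤ)
      = ((n : ℤ) + 1 - (k : ℤ))
        + ∑ᶠ W ∈ {W : List α | hash ∉ W ∧ W <:+: (T ++ [hash]) ∧
            2 ≤ r W ∧ k ≤ W.length}, (1 - (r W : ℤ)) := by
  classical
  subst hn
  have hr_card (W : List α) : r W = (rightExtensions (T ++ [hash]) W).card := by
    rw [hr, ← coe_rightExtensions, Set.ncard_coe_finset]
  have hfactors : {W | hash ∉ W ∧ W <:+: T ++ [hash] ∧ 2 ≤ r W ∧ k ≤ W.length}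
      = ↑{W ∈ (Ico k (T.length + 1)).biUnion (factorsOfLength T) | 2 ≤ r W} := by
    ext W
    simp only [← and_assoc, List.notMem_and_infix_concat_iff hhash]
    simp only [coe_filter, mem_biUnion, mem_Ico, mem_factorsOfLength, Set.mem_ofPred_eq]
    exact ⟨fun ⟨⟨hW, h2⟩, hk⟩ => ⟨⟨W.length, ⟨hk, Nat.lt_succ_of_le hW.length_le⟩, rfl, hW⟩, h2⟩,
      fun ⟨⟨_, ⟨hk, _⟩, rfl, hW⟩, h2⟩ => ⟨⟨hW, h2⟩, hk⟩⟩
  have hrightMaximal : ∀ W ∈ (Ico k (T.length + 1)).biUnion (factorsOfLength T),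
      1 - (r W : ℤ) ≠ 0 → 2 ≤ r W := by
    intro W hW hne
    obtain ⟨m, -, hW⟩ := mem_biUnion.mp hW
    have := hr_card W ▸ one_le_card_rightExtensions (mem_factorsOfLength.mp hW).2 hash
    omega
  rw [hfactors, finsum_mem_coe_finset, sum_filter_of_ne hrightMaximal,
    sum_biUnion (pairwiseDisjoint_factorsOfLength T _), ← coe_factorsOfLength,
    Set.ncard_coe_finset]
  simp only [hr_card]
  exact card_factorsOfLength_eq_add_sum hhash (by omega)

/-- the telescoping identity for the `k`-mer complexity.  For
`W` a factor of `T# = T ++ [#]` not containing `#`, `r W` is the number of distinct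
characters `c` such that `W·c` is a factor of `T#`; `W` is right-maximal in `T#`
when `r W ≥ 2`.  Then, for `1 ≤ k ≤ n`, the number of distinct length-`k` factors
of `T` equals `(n + 1 − k) + Σ_W (1 − r W)`, the sum ranging over the right-maximal
factors `W` of `T#` not containing `#` with `|W| ≥ k`. -/
theorem kmer_complexity_telescoping {α : Type*} (T : List α) (n : ℕ)
    (hn : T.length = n) (hash : α) (hhash : hash ∉ T)
    (r : List α → ℕ)
    (hr : ∀ W, r W = {c : α | (W ++ [c]) <:+: (T ++ [hash])}.ncard)
    (k : ℕ) (hk1 : 1 ≤ k) (hkn : k ≤ n) :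
    ({W : List α | W.length = k ∧ W <:+: T}.ncard : ℤ)
      = ((n : ℤ) + 1 - (k : ℤ))
        + ∑ᶠ W ∈ {W : List α | hash ∉ W ∧ W <:+: (T ++ [hash]) ∧
            2 ≤ r W ∧ k ≤ W.length}, (1 - (r W : ℤ)) :=
  kmer_complexity_telescoping_general T n hn hash hhash r hr k hkn
end

section
/- Let T ∈ Σ^n, let # ∉ Σ be strictly smaller than every character of Σ, and let T# be T with # appended, so that all n+1 rotations of T# are pairwise distinct. Define LCP[1] = 0 and, for 2 ≤ i ≤ n+1, LCP[i] = the length of the longest common prefix of the rotations of T# of lexicographic ranks i−1 and i. Then the number of distinct nonempty factors of T (the substring complexity C(T)) equals n(n+1)/2 − Σ_{i=1}^{n+1} LCP[i]. -/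
/-!
A nonempty factor of `T` is a prefix of length `ℓ ≤ n - p` of the suffix `T[p..]`, i.e. a `#`-free
prefix of the rotation of `T#` starting at `p`. List the rotations by rank. Because they are sorted,
a prefix of length `ℓ` of the rotation of rank `i` already occurs at a smaller rank iff it occurs at
rank `i - 1`, i.e. iff `ℓ ≤ LCP i`. Hence rank `i` contributes exactly `(n + 1 - sa i) - LCP i` new
factors. `LCP i ≤ n + 1 - sa i` holds because `#` occurs only once, so two rotations sharing a
prefix that contains `#` are equal. Since `sa` is a permutation of the ranks, summing gives
`n(n+1)/2 - ∑ LCP i`.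
-/

open Finset

namespace List

section Lex

variable {α : Type*} [LinearOrder α]

theorem take_le_take_of_le {a b : List α} (h : a ≤ b) (m : ℕ) : a.take m ≤ b.take m := by
  induction m generalizing a b with
  | zero => simp
  | succ k ih =>
    rcases h.lt_or_eq with hlt | rfl
    · change Lex (· < ·) a b at hlt
      cases hlt with
      | nil => exact (Lex.nil : [] < _).le
      | cons htail => exact cons_le_cons _ (ih (le_of_lt htail))
      | rel hhead => exact (Lex.rel hhead : take (k + 1) _ < take (k + 1) _).le
    · exact le_rfl

theorem take_eq_of_le_of_le {a b c : List α} (hab : a ≤ b) (hbc : b ≤ c) {m : ℕ}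
    (h : a.take m = c.take m) : b.take m = c.take m :=
  le_antisymm (take_le_take_of_le hbc m) (h ▸ take_le_take_of_le hab m)

end Lex

section Rotation

variable {α : Type*} {T : List α} {c : α} {p k : ℕ}

theorem rotate_append_singleton (hp : p ≤ T.length) :
    (T ++ [c]).rotate p = T.drop p ++ c :: T.take p := by
  rw [rotate_eq_drop_append_take (by simp; omega), drop_append_of_le_length hp,
    take_append_of_le_length hp, append_assoc, singleton_append]

theorem take_rotate_append_singleton_of_le (hp : p ≤ T.length) (hk : k ≤ T.length - p) :
    ((T ++ [c]).rotate p).take k = (T.drop p).take k := by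
  rw [rotate_append_singleton hp, take_append_of_le_length (by simpa using hk)]

theorem take_rotate_append_singleton_of_lt (hp : p ≤ T.length) (hk : T.length - p < k) :
    ((T ++ [c]).rotate p).take k = T.drop p ++ c :: (T.take p).take (k - (T.length - p) - 1) := by
  rw [rotate_append_singleton hp, take_append, take_of_length_le (by simp; omega), length_drop,
    show k - (T.length - p) = k - (T.length - p) - 1 + 1 by omega, take_succ_cons,
    Nat.add_sub_cancel]

theorem mem_take_rotate_append_singleton_iff (hc : c ∉ T) (hp : p ≤ T.length) :
    c ∈ ((T ++ [c]).rotate p).take k ↔ T.length - p < k := by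
  refine ⟨fun h => ?_, fun hk => by simp [take_rotate_append_singleton_of_lt hp hk]⟩
  by_contra! hk
  rw [take_rotate_append_singleton_of_le hp hk] at h
  exact hc ((drop_subset _ _) (take_subset _ _ h))

theorem eq_of_take_rotate_append_singleton_eq (hc : c ∉ T) {q : ℕ} (hp : p ≤ T.length)
    (hq : q ≤ T.length) (hk : T.length - q < k)
    (h : ((T ++ [c]).rotate p).take k = ((T ++ [c]).rotate q).take k) : p = q := by
  have hkp : T.length - p < k := by
    rw [← mem_take_rotate_append_singleton_iff hc hp, h,
      mem_take_rotate_append_singleton_iff hc hq]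
    exact hk
  rw [take_rotate_append_singleton_of_lt hp hkp, take_rotate_append_singleton_of_lt hq hk,
    append_cons_inj_of_notMem (fun h' => hc (drop_subset _ _ h'))
      (fun h' => hc (take_subset _ _ (take_subset _ _ h')))] at h
  have := congrArg length h.1
  simp only [length_drop] at this
  omega

theorem le_of_take_rotate_append_singleton_eq (hc : c ∉ T) {q : ℕ} (hp : p ≤ T.length)
    (hq : q ≤ T.length) (h : ((T ++ [c]).rotate p).take k = ((T ++ [c]).rotate q).take k)
    (hk : k ≤ T.length - q) : k ≤ T.length - p := by
  by_contra! hkp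
  have := (mem_take_rotate_append_singleton_iff hc hp).2 hkp
  rw [h, mem_take_rotate_append_singleton_iff hc hq] at this
  omega

end Rotation

theorem setOf_ne_nil_infix_eq {α : Type*} (T : List α) :
    {W | W ≠ [] ∧ W <:+: T} =
      {W | ∃ p ≤ T.length, ∃ ℓ, 0 < ℓ ∧ ℓ ≤ T.length - p ∧ (T.drop p).take ℓ = W} := by
  ext W
  constructor
  · rintro ⟨hW, hinf⟩
    obtain ⟨t, hWt, htT⟩ := infix_iff_prefix_suffix.1 hinf
    refine ⟨T.length - t.length, by omega, W.length, length_pos_iff.2 hW, ?_, ?_⟩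
    · have := hWt.length_le
      have := htT.length_le
      omega
    · rw [← suffix_iff_eq_drop.1 htT, ← prefix_iff_eq_take.1 hWt]
  · rintro ⟨p, hp, ℓ, hℓ, hℓp, rfl⟩
    exact ⟨ne_nil_of_length_pos (by simp; omega),
      (take_prefix _ _).isInfix.trans (drop_suffix _ _).isInfix⟩

end List

section SortedPrefixes

variable {α : Type*} [LinearOrder α]

def IsLCPArray (r : ℕ → List α) (N : ℕ) (L : ℕ → ℕ) : Prop :=
  L 1 = 0 ∧ ∀ i, 2 ≤ i → i ≤ N → IsGreatest {l | (r (i - 1)).take l = (r i).take l} (L i)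

variable {r : ℕ → List α} {N : ℕ} {L d : ℕ → ℕ}

namespace IsLCPArray

theorem le_of_take_eq (hL : IsLCPArray r N L) (hr : StrictMonoOn r (Set.Icc 1 N))
    {i j ℓ : ℕ} (hi : 1 ≤ i) (hij : i < j) (hj : j ≤ N)
    (h : (r i).take ℓ = (r j).take ℓ) : ℓ ≤ L j := by
  have mem : ∀ k, 1 ≤ k → k ≤ N → k ∈ Set.Icc 1 N := fun k h₁ h₂ => ⟨h₁, h₂⟩
  refine (hL.2 j (by omega) hj).2 (List.take_eq_of_le_of_le ?_ ?_ h)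
  · exact hr.monotoneOn (mem i hi (by omega)) (mem (j - 1) (by omega) (by omega)) (by omega)
  · exact hr.monotoneOn (mem (j - 1) (by omega) (by omega)) (mem j (by omega) hj) (by omega)

theorem injOn_take (hL : IsLCPArray r N L) (hr : StrictMonoOn r (Set.Icc 1 N))
    (hd : ∀ i ∈ Icc 1 N, d i ≤ (r i).length) :
    Set.InjOn (fun x : (_ : ℕ) × ℕ => (r x.1).take x.2)
      ((Icc 1 N).sigma fun i => Ioc (L i) (d i)) := by
  rintro ⟨i, ℓ⟩ hiℓ ⟨j, m⟩ hjm (h : (r i).take ℓ = (r j).take m)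
  simp only [coe_sigma, Set.mem_sigma_iff, coe_Icc, coe_Ioc, Set.mem_Icc, Set.mem_Ioc]
    at hiℓ hjm
  have hd_i := hd i (mem_Icc.2 hiℓ.1)
  have hd_j := hd j (mem_Icc.2 hjm.1)
  obtain rfl : ℓ = m := by
    have := congrArg List.length h
    simp only [List.length_take] at this
    omega
  rcases lt_trichotomy i j with hij | rfl | hji
  · have := hL.le_of_take_eq hr hiℓ.1.1 hij hjm.1.2 h
    omega
  · rfl
  · have := hL.le_of_take_eq hr hjm.1.1 hji hiℓ.1.2 h.symm
    omega

theorem image_take (hL : IsLCPArray r N L)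
    (hd : ∀ i ∈ Icc 1 N, ∀ j ∈ Icc 1 N, ∀ ℓ, (r i).take ℓ = (r j).take ℓ → ℓ ≤ d j → ℓ ≤ d i) :
    (fun x : (_ : ℕ) × ℕ => (r x.1).take x.2) '' ((Icc 1 N).sigma fun i => Ioc (L i) (d i)) =
      {W | ∃ i ∈ Icc 1 N, ∃ ℓ, 0 < ℓ ∧ ℓ ≤ d i ∧ (r i).take ℓ = W} := by
  ext W
  constructor
  · rintro ⟨⟨i, ℓ⟩, hiℓ, rfl⟩
    simp only [coe_sigma, Set.mem_sigma_iff, mem_coe, mem_Ioc] at hiℓ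
    exact ⟨i, hiℓ.1, ℓ, by omega, hiℓ.2.2, rfl⟩
  · rintro ⟨j, hj, ℓ, hℓ, hℓd, rfl⟩
    classical
    have hex : ∃ i, i ∈ Icc 1 N ∧ (r i).take ℓ = (r j).take ℓ := ⟨j, hj, rfl⟩
    obtain ⟨hi, hiW⟩ := Nat.find_spec hex
    set i := Nat.find hex
    have hLi : L i < ℓ := by
      by_contra! hle
      obtain ⟨hi1, hiN⟩ := mem_Icc.1 hi
      rcases hi1.eq_or_lt with h1 | h1
      · rw [← h1, hL.1] at hle
        omega
      have hprev : (r (i - 1)).take ℓ = (r i).take ℓ := by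
        have := congrArg (List.take ℓ) (hL.2 i h1 hiN).1
        rwa [List.take_take, List.take_take, min_eq_left hle] at this
      exact Nat.find_min hex (show i - 1 < i by omega)
        ⟨mem_Icc.2 ⟨by omega, by omega⟩, hprev.trans hiW⟩
    exact ⟨⟨i, ℓ⟩, mem_coe.2 (mem_sigma.2 ⟨hi, mem_Ioc.2 ⟨hLi, hd i hi j hj ℓ hiW hℓd⟩⟩), hiW⟩

theorem ncard_prefixes (hL : IsLCPArray r N L) (hr : StrictMonoOn r (Set.Icc 1 N))
    (hlen : ∀ i ∈ Icc 1 N, d i ≤ (r i).length)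
    (hd : ∀ i ∈ Icc 1 N, ∀ j ∈ Icc 1 N, ∀ ℓ, (r i).take ℓ = (r j).take ℓ → ℓ ≤ d j → ℓ ≤ d i) :
    {W | ∃ i ∈ Icc 1 N, ∃ ℓ, 0 < ℓ ∧ ℓ ≤ d i ∧ (r i).take ℓ = W}.ncard =
      ∑ i ∈ Icc 1 N, (d i - L i) := by
  rw [← hL.image_take hd, (hL.injOn_take hr hlen).ncard_image, Set.ncard_coe_finset,
    card_sigma]
  simp only [Nat.card_Ioc]

end IsLCPArray

end SortedPrefixes

theorem sum_Icc_sub_of_bijOn {n : ℕ} {σ : ℕ → ℕ}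
    (hσ : Set.BijOn σ (Set.Icc 1 (n + 1)) (Set.Icc 1 (n + 1))) :
    ∑ i ∈ Icc 1 (n + 1), (n - (σ i - 1)) = n * (n + 1) / 2 := by
  have hσ_mem : ∀ i ∈ Icc 1 (n + 1), 1 ≤ σ i ∧ σ i ≤ n + 1 :=
    fun i hi => hσ.mapsTo (mem_Icc.1 hi)
  have hreflect : ∑ i ∈ Icc 1 (n + 1), (n - (σ i - 1)) = ∑ k ∈ range (n + 1), k := by
    refine sum_nbij (fun i => n - (σ i - 1))
      (fun i hi => mem_range.2 (by have := hσ_mem i hi; omega))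
      (fun i hi j hj hij => hσ.injOn (mem_Icc.1 hi) (mem_Icc.1 hj)
        (by have := hσ_mem i hi; have := hσ_mem j hj; simp only at hij; omega))
      (fun k hk => ?_) (fun _ _ => rfl)
    have hk : k < n + 1 := mem_range.1 hk
    obtain ⟨i, hi, hσi⟩ := hσ.surjOn (show n + 1 - k ∈ Set.Icc 1 (n + 1) from
      ⟨by omega, by omega⟩)
    exact ⟨i, mem_coe.2 (mem_Icc.2 hi), by simp only [hσi]; omega⟩
  rw [hreflect, sum_range_id, Nat.add_sub_cancel, mul_comm]

section SuffixArray

variable {α : Type*} {T : List α} {c : α} {sa : ℕ → ℕ}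

theorem setOf_ne_nil_infix_eq_take_rotate
    (hsa : Set.BijOn sa (Set.Icc 1 (T.length + 1)) (Set.Icc 1 (T.length + 1))) :
    {W | W ≠ [] ∧ W <:+: T} = {W | ∃ i ∈ Icc 1 (T.length + 1), ∃ ℓ, 0 < ℓ ∧
      ℓ ≤ T.length - (sa i - 1) ∧ ((T ++ [c]).rotate (sa i - 1)).take ℓ = W} := by
  rw [List.setOf_ne_nil_infix_eq]
  ext W
  constructor
  · rintro ⟨p, hp, ℓ, hℓ, hℓp, rfl⟩
    obtain ⟨i, hi, hsai⟩ := hsa.surjOn (show p + 1 ∈ Set.Icc 1 (T.length + 1) from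
      ⟨by omega, by omega⟩)
    refine ⟨i, mem_Icc.2 hi, ℓ, hℓ, ?_, ?_⟩
    · rwa [hsai, Nat.add_sub_cancel]
    · rw [hsai, Nat.add_sub_cancel, List.take_rotate_append_singleton_of_le hp hℓp]
  · rintro ⟨i, hi, ℓ, hℓ, hℓd, rfl⟩
    have := hsa.mapsTo (mem_Icc.1 hi)
    simp only [Set.mem_Icc] at this
    exact ⟨sa i - 1, by omega, ℓ, hℓ, hℓd,
      (List.take_rotate_append_singleton_of_le (by omega) hℓd).symm⟩

theorem IsLCPArray.le_length_sub [LinearOrder α] {L : ℕ → ℕ} (hc : c ∉ T)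
    (hL : IsLCPArray (fun i => (T ++ [c]).rotate (sa i - 1)) (T.length + 1) L)
    (hr : StrictMonoOn (fun i => (T ++ [c]).rotate (sa i - 1)) (Set.Icc 1 (T.length + 1)))
    (hsa : Set.MapsTo sa (Set.Icc 1 (T.length + 1)) (Set.Icc 1 (T.length + 1))) :
    ∀ i ∈ Icc 1 (T.length + 1), L i ≤ T.length - (sa i - 1) := by
  intro i hi
  obtain ⟨hi1, hiN⟩ := mem_Icc.1 hi
  rcases hi1.eq_or_lt with rfl | h1
  · rw [hL.1]
    exact Nat.zero_le _
  by_contra! hlt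
  have hprev := hsa ⟨(by omega : 1 ≤ i - 1), (by omega : i - 1 ≤ T.length + 1)⟩
  have hcur := hsa ⟨hi1, hiN⟩
  simp only [Set.mem_Icc] at hprev hcur
  have hsa_eq := List.eq_of_take_rotate_append_singleton_eq hc (by omega) (by omega) hlt
    (hL.2 i h1 hiN).1
  have : i - 1 = i := hr.injOn ⟨by omega, by omega⟩ ⟨hi1, hiN⟩
    (show (T ++ [c]).rotate (sa (i - 1) - 1) = (T ++ [c]).rotate (sa i - 1) by rw [hsa_eq])
  omega

theorem le_of_take_rotate_sa_eq (hc : c ∉ T)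
    (hsa : Set.MapsTo sa (Set.Icc 1 (T.length + 1)) (Set.Icc 1 (T.length + 1)))
    {i j ℓ : ℕ} (hi : i ∈ Icc 1 (T.length + 1)) (hj : j ∈ Icc 1 (T.length + 1))
    (h : ((T ++ [c]).rotate (sa i - 1)).take ℓ = ((T ++ [c]).rotate (sa j - 1)).take ℓ)
    (hℓ : ℓ ≤ T.length - (sa j - 1)) : ℓ ≤ T.length - (sa i - 1) := by
  have hsai := hsa (mem_Icc.1 hi)
  have hsaj := hsa (mem_Icc.1 hj)
  simp only [Set.mem_Icc] at hsai hsaj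
  exact List.le_of_take_rotate_append_singleton_eq hc (by omega) (by omega) h hℓ

end SuffixArray

theorem substring_complexity_eq_general {α : Type*} [LinearOrder α]
    (T : List α) (n : ℕ) (hn : T.length = n)
    (hash : α) (hhash : ∀ c ∈ T, hash < c)
    (sa : ℕ → ℕ)
    (hsa_range : ∀ i, 1 ≤ i → i ≤ n + 1 → 1 ≤ sa i ∧ sa i ≤ n + 1)
    (hsa_mono : ∀ i j, 1 ≤ i → i < j → j ≤ n + 1 →
      List.Lex (· < ·) ((T ++ [hash]).rotate (sa i - 1)) ((T ++ [hash]).rotate (sa j - 1)))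
    (LCP : ℕ → ℕ) (hLCP1 : LCP 1 = 0)
    (hLCP : ∀ i, 2 ≤ i → i ≤ n + 1 →
      IsGreatest {l | ((T ++ [hash]).rotate (sa (i - 1) - 1)).take l
        = ((T ++ [hash]).rotate (sa i - 1)).take l} (LCP i)) :
    {W : List α | W ≠ [] ∧ W <:+: T}.ncard
      = n * (n + 1) / 2 - ∑ i ∈ Finset.Icc 1 (n + 1), LCP i := by
  subst hn
  set r : ℕ → List α := fun i => (T ++ [hash]).rotate (sa i - 1)
  have hc : hash ∉ T := fun h => lt_irrefl _ (hhash _ h)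
  have hr : StrictMonoOn r (Set.Icc 1 (T.length + 1)) :=
    fun i hi j hj hij => hsa_mono i j hi.1 hij hj.2
  have hL : IsLCPArray r (T.length + 1) LCP := ⟨hLCP1, hLCP⟩
  have hmaps : Set.MapsTo sa (Set.Icc 1 (T.length + 1)) (Set.Icc 1 (T.length + 1)) :=
    fun i hi => hsa_range i hi.1 hi.2
  have hbij : Set.BijOn sa (Set.Icc 1 (T.length + 1)) (Set.Icc 1 (T.length + 1)) :=
    ((Set.finite_Icc _ _).injOn_iff_bijOn_of_mapsTo hmaps).1
      (fun i hi j hj hij => hr.injOn hi hj (by simp only [r, hij]))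
  rw [setOf_ne_nil_infix_eq_take_rotate hbij,
    hL.ncard_prefixes hr (fun i _ => by
      simp only [r, List.length_rotate, List.length_append, List.length_singleton]; omega)
      (fun _ hi _ hj _ h => le_of_take_rotate_sa_eq hc hmaps hi hj h),
    sum_tsub_distrib _ (hL.le_length_sub hc hr hmaps), sum_Icc_sub_of_bijOn hbij]

/-- substring complexity from the LCP array.  `sa` is the (1-based)
suffix array of `T# = T ++ [#]` (where `#` is strictly smaller than every character
of the alphabet, so all `n+1` rotations of `T#` are pairwise distinct), and `LCP i`
is the length of the longest common prefix of the rotations of `T#` of lexicographic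
ranks `i−1` and `i` (with `LCP 1 = 0`).  Then the number of distinct nonempty
factors of `T` equals `n(n+1)/2 − Σ_{i=1}^{n+1} LCP i`. -/
theorem substring_complexity_eq {α : Type*} [LinearOrder α]
    (T : List α) (n : ℕ) (hn : T.length = n)
    (hash : α) (hhash : ∀ c ∈ T, hash < c)
    (sa : ℕ → ℕ)
    (hsa_range : ∀ i, 1 ≤ i → i ≤ n + 1 → 1 ≤ sa i ∧ sa i ≤ n + 1)
    (hsa_mono : ∀ i j, 1 ≤ i → i < j → j ≤ n + 1 →
      List.Lex (· < ·) ((T ++ [hash]).rotate (sa i - 1)) ((T ++ [hash]).rotate (sa j - 1)))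
    (hsa_surj : ∀ v, 1 ≤ v → v ≤ n + 1 → ∃ i, 1 ≤ i ∧ i ≤ n + 1 ∧ sa i = v)
    (LCP : ℕ → ℕ) (hLCP1 : LCP 1 = 0)
    (hLCP : ∀ i, 2 ≤ i → i ≤ n + 1 →
      IsGreatest {l | ((T ++ [hash]).rotate (sa (i - 1) - 1)).take l
        = ((T ++ [hash]).rotate (sa i - 1)).take l} (LCP i)) :
    {W : List α | W ≠ [] ∧ W <:+: T}.ncard
      = n * (n + 1) / 2 - ∑ i ∈ Finset.Icc 1 (n + 1), LCP i :=
  substring_complexity_eq_general T n hn hash hhash sa hsa_range hsa_mono LCP hLCP1 hLCP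
end
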